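/- arXiv:0903.2345 — 6 statements merged into one kernel-verified Lean document; each statement's English description precedes it below -/
import Mathlib

section
/- Assume (H2). Let S be either all of ℝ^d or a half-space {h ∈ ℝ^d : h·u > 0} for some u ∈ ℝ^d \ {0}. Let f : ℝ^d → ℝ satisfy f(0)=0 and |f(x)−f(y)| ≤ K‖x−y‖·max{‖x‖,‖y‖,‖x‖²,‖y‖²} for all x,y ∈ ℝ^d and some constant K. Then the function φ(x) = ∫_S f(h) p(x,h) dh is well-defined (the integral is absolutely convergent) and globally Lipschitz on ℝ^d. -/
open MeasureTheory Real Set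
open scoped RealInnerProductSpace ENNReal NNReal

noncomputable section

abbrev Euc (d : ℕ) := EuclideanSpace ℝ (Fin d)

variable {d : ℕ}

/-- gradient of `g` with respect to its first variable -/
def grad1 (g : Euc d → Euc d → ℝ) (y x : Euc d) : Euc d :=
  gradient (fun z => g z x) y

/-- Hessian of `g` with respect to its first variable, as a continuous bilinear map -/
def hess11 (g : Euc d → Euc d → ℝ) (y x : Euc d) : Euc d →L[ℝ] Euc d →L[ℝ] ℝ :=
  fderiv ℝ (fderiv ℝ (fun z => g z x)) y

/-- set of evolutionary singularities -/
def Gam (g : Euc d → Euc d → ℝ) : Set (Euc d) := {x | grad1 g x x = 0}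

def GamAlpha (g : Euc d → Euc d → ℝ) (α : ℝ) : Set (Euc d) :=
  {x | α ≤ Metric.infDist x (Gam g) ∧ ‖x‖ ≤ 1 / α}

/-- `p` is a measurable symmetric probability-density kernel -/
def IsMutKernel (p : Euc d → Euc d → ℝ) : Prop :=
  Measurable (Function.uncurry p) ∧
  (∀ x h, 0 ≤ p x h) ∧
  (∀ x, Integrable (fun h => p x h)) ∧
  (∀ x, (∫ h, p x h) = 1) ∧
  (∀ x h, p x (-h) = p x h)

/-- Assumption (H2) -/
def H2 (p : Euc d → Euc d → ℝ) : Prop :=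
  (∀ x, Integrable (fun h : Euc d => ‖h‖ ^ 3 * p x h)) ∧
  (∃ M : ℝ, ∀ x, (∫ h : Euc d, ‖h‖ ^ 3 * p x h) ≤ M) ∧
  ∃ m : ℝ → ℝ, Measurable m ∧ (∀ r, 0 ≤ m r) ∧
    Integrable (fun h : Euc d => (‖h‖ ^ 2 ⊔ ‖h‖ ^ 3) * m ‖h‖) ∧
    (∀ x y h, |p x h - p y h| ≤ ‖x - y‖ * m ‖h‖) ∧
    (∀ x h, p x h ≤ m ‖h‖)

/-- Assumption (H1) -/
def H1 (g : Euc d → Euc d → ℝ) : Prop :=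
  (∀ x : Euc d, ContDiff ℝ 2 (fun z => g z x)) ∧
  (∃ C : ℝ, ∀ y x : Euc d, ‖grad1 g y x‖ ≤ C) ∧
  (∃ K : ℝ≥0, LipschitzWith K (fun q : Euc d × Euc d => grad1 g q.1 q.2)) ∧
  (∃ C : ℝ, ∀ y x : Euc d, ‖hess11 g y x‖ ≤ C) ∧
  (∃ K : ℝ≥0, LipschitzWith K (fun q : Euc d × Euc d => hess11 g q.1 q.2))

/-- drift coefficient b -/
def bCoeff (g p : Euc d → Euc d → ℝ) (x : Euc d) : Euc d :=
  (WithLp.equiv 2 (Fin d → ℝ)).symm fun k =>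
    ∫ h : Euc d, h k * max (⟪grad1 g x x, h⟫) 0 * p x h

/-- diffusion matrix a -/
def aMat (g p : Euc d → Euc d → ℝ) (x : Euc d) : Matrix (Fin d) (Fin d) ℝ :=
  Matrix.of fun k l => ∫ h : Euc d, h k * h l * max (⟪h, grad1 g x x⟫) 0 * p x h

/-- second-order drift coefficient b-tilde -/
def btCoeff (g p : Euc d → Euc d → ℝ) (x : Euc d) : Euc d :=
  (WithLp.equiv 2 (Fin d → ℝ)).symm fun k =>
    (1 / 2) * ∫ h in {h : Euc d | 0 < ⟪h, grad1 g x x⟫},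
      h k * hess11 g x x h h * p x h

/-- quadratic form sᵀ a(x) s -/
def quadA (g p : Euc d → Euc d → ℝ) (x s : Euc d) : ℝ :=
  ∑ k, ∑ l, s k * aMat g p x k l * s l

/-- quadratic form sᵀ a(x)⁻¹ s -/
def quadAInv (g p : Euc d → Euc d → ℝ) (x s : Euc d) : ℝ :=
  ∑ k, ∑ l, s k * (aMat g p x)⁻¹ k l * s l

/-- full Hessian of `g` (as a function on the product space) at `(y,x)` -/
def hessF (g : Euc d → Euc d → ℝ) (y x : Euc d) :
    (Euc d × Euc d) →L[ℝ] (Euc d × Euc d) →L[ℝ] ℝ :=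
  fderiv ℝ (fderiv ℝ (fun q : Euc d × Euc d => g q.1 q.2)) (y, x)

/-- action of a matrix on a vector of `Euc d` -/
def mulVecE (M : Matrix (Fin d) (Fin d) ℝ) (v : Euc d) : Euc d :=
  (WithLp.equiv 2 (Fin d → ℝ)).symm (M.mulVec (WithLp.equiv 2 (Fin d → ℝ) v))

theorem stmt0 {d : ℕ} (hd : 1 ≤ d) (p : Euc d → Euc d → ℝ)
    (hker : IsMutKernel p) (hH2 : H2 p)
    (S : Set (Euc d))
    (hS : S = Set.univ ∨ ∃ u : Euc d, u ≠ 0 ∧ S = {h : Euc d | 0 < ⟪h, u⟫})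
    (f : Euc d → ℝ) (hf0 : f 0 = 0) (K : ℝ)
    (hf : ∀ x y : Euc d,
      |f x - f y| ≤ K * ‖x - y‖ * max (max ‖x‖ ‖y‖) (max (‖x‖ ^ 2) (‖y‖ ^ 2))) :
    (∀ x : Euc d, IntegrableOn (fun h => f h * p x h) S) ∧
    ∃ L : ℝ≥0, LipschitzWith L (fun x : Euc d => ∫ h in S, f h * p x h) := by
  obtain ⟨hpmeas, hpnn, hpint, hpone, hpsymm⟩ := hker
  obtain ⟨h3int, hM, m, hm_meas, hm_nn, hm_int, hm_lip, hm_bd⟩ := hH2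
  -- K is nonnegative
  have hK : 0 ≤ K := by
    set v : Euc d := EuclideanSpace.single (⟨0, hd⟩ : Fin d) (1:ℝ) with hv
    have hvn : ‖v‖ = 1 := by simp [hv, EuclideanSpace.norm_single]
    have h1 := hf v 0
    rw [hf0, sub_zero, sub_zero, hvn] at h1
    simp at h1
    nlinarith [abs_nonneg (f v)]
  -- pointwise bound on |f|
  have supnn : ∀ h : Euc d, (0:ℝ) ≤ ‖h‖^2 ⊔ ‖h‖^3 :=
    fun h => le_sup_of_le_left (by positivity)
  have hfb : ∀ h : Euc d, |f h| ≤ K * (‖h‖^2 ⊔ ‖h‖^3) := by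
    intro h
    have h1 := hf h 0
    rw [hf0, sub_zero, sub_zero] at h1
    have h2 : max (max ‖h‖ ‖(0:Euc d)‖) (max (‖h‖^2) (‖(0:Euc d)‖^2))
        = max ‖h‖ (‖h‖^2) := by
      norm_num [max_eq_left (norm_nonneg h), max_eq_left (sq_nonneg ‖h‖)]
    rw [h2] at h1
    have h3 : K * ‖h‖ * max ‖h‖ (‖h‖^2) = K * (‖h‖^2 ⊔ ‖h‖^3) := by
      rw [mul_assoc, mul_max_of_nonneg _ _ (norm_nonneg h)]
      congr 1
      congr 1 <;> ring
    linarith [h1, h3.le, h3.ge]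
  -- continuity of f
  have key : ∀ x y : Euc d, dist y x ≤ 1 →
      |f y - f x| ≤ (K * (‖x‖ + 1)^2) * dist y x := by
    intro x y hxy
    have hyx : ‖y‖ ≤ ‖x‖ + 1 := by
      have := norm_sub_norm_le y x
      rw [← dist_eq_norm] at this
      linarith
    have hx1 : ‖x‖ ≤ ‖x‖ + 1 := by linarith
    have hR1 : (1:ℝ) ≤ ‖x‖ + 1 := by linarith [norm_nonneg x]
    have hRR : ‖x‖ + 1 ≤ (‖x‖ + 1)^2 := by nlinarith
    have hb : max (max ‖y‖ ‖x‖) (max (‖y‖^2) (‖x‖^2)) ≤ (‖x‖ + 1)^2 := by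
      have h1 : ‖y‖^2 ≤ (‖x‖+1)^2 := by nlinarith [norm_nonneg y]
      have h2 : ‖x‖^2 ≤ (‖x‖+1)^2 := by nlinarith [norm_nonneg x]
      exact max_le (max_le (hyx.trans hRR) (hx1.trans hRR)) (max_le h1 h2)
    calc |f y - f x| ≤ K * ‖y - x‖ * max (max ‖y‖ ‖x‖) (max (‖y‖^2) (‖x‖^2)) :=
          hf y x
      _ ≤ K * ‖y - x‖ * (‖x‖ + 1)^2 :=
          mul_le_mul_of_nonneg_left hb (mul_nonneg hK (norm_nonneg _))
      _ = (K * (‖x‖ + 1)^2) * dist y x := by rw [dist_eq_norm]; ring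
  have hfc : Continuous f := by
    rw [Metric.continuous_iff]
    intro x ε hε
    set A := K * (‖x‖ + 1)^2 with hA
    have hA0 : 0 ≤ A := mul_nonneg hK (by positivity)
    refine ⟨min 1 (ε / (A + 1)), lt_min one_pos (by positivity), fun y hy => ?_⟩
    have hy1 : dist y x ≤ 1 := le_of_lt (lt_of_lt_of_le hy (min_le_left _ _))
    have hy2 : dist y x < ε / (A + 1) := lt_of_lt_of_le hy (min_le_right _ _)
    have h1 := key x y hy1
    rw [Real.dist_eq]
    have h2 : dist y x * (A + 1) < ε := by
      rw [← lt_div_iff₀ (by positivity)]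
      exact hy2
    nlinarith [dist_nonneg (x := y) (y := x)]
  -- measurability
  have hfm : ∀ x : Euc d, AEStronglyMeasurable (fun h => f h * p x h) volume := by
    intro x
    exact hfc.aestronglyMeasurable.mul
      ((hpmeas.comp (measurable_prodMk_left : Measurable fun h : Euc d => (x, h))).aestronglyMeasurable)
  -- domination & integrability
  have hdom : Integrable (fun h : Euc d => K * ((‖h‖^2 ⊔ ‖h‖^3) * m ‖h‖)) :=
    hm_int.const_mul K
  have hint : ∀ x : Euc d, Integrable (fun h => f h * p x h) := by
    intro x
    refine hdom.mono' (hfm x) ?_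
    filter_upwards with h
    have : ‖f h * p x h‖ = |f h| * p x h := by
      rw [norm_mul, Real.norm_eq_abs, Real.norm_eq_abs, abs_of_nonneg (hpnn x h)]
    rw [this]
    calc |f h| * p x h ≤ (K * (‖h‖^2 ⊔ ‖h‖^3)) * m ‖h‖ :=
          mul_le_mul (hfb h) (hm_bd x h) (hpnn x h) (mul_nonneg hK (supnn h))
      _ = K * ((‖h‖^2 ⊔ ‖h‖^3) * m ‖h‖) := by ring
  refine ⟨fun x => (hint x).integrableOn, ?_⟩
  -- Lipschitz constant
  set I := ∫ h : Euc d, (‖h‖^2 ⊔ ‖h‖^3) * m ‖h‖ with hI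
  have hI0 : 0 ≤ I := integral_nonneg fun h => mul_nonneg (supnn h) (hm_nn _)
  refine ⟨⟨K * I, mul_nonneg hK hI0⟩, LipschitzWith.of_dist_le_mul fun x y => ?_⟩
  rw [Real.dist_eq, dist_eq_norm]
  show |(∫ h in S, f h * p x h) - ∫ h in S, f h * p y h| ≤ K * I * ‖x - y‖
  have hix := (hint x).integrableOn (s := S)
  have hiy := (hint y).integrableOn (s := S)
  have hdom2 : Integrable (fun h : Euc d =>
      (K * ‖x - y‖) * ((‖h‖^2 ⊔ ‖h‖^3) * m ‖h‖)) :=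
    hm_int.const_mul _
  calc |(∫ h in S, f h * p x h) - ∫ h in S, f h * p y h|
      = |∫ h in S, (f h * p x h - f h * p y h)| := by
        rw [integral_sub hix hiy]
    _ ≤ ∫ h in S, |f h * p x h - f h * p y h| := by
        simpa [Real.norm_eq_abs] using norm_integral_le_integral_norm
          (μ := volume.restrict S) (fun h => f h * p x h - f h * p y h)
    _ ≤ ∫ h in S, (K * ‖x - y‖) * ((‖h‖^2 ⊔ ‖h‖^3) * m ‖h‖) := by
        refine integral_mono (hix.sub hiy).abs hdom2.integrableOn fun h => ?_
        have h1 : f h * p x h - f h * p y h = f h * (p x h - p y h) := by ring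
        rw [h1, abs_mul]
        calc |f h| * |p x h - p y h|
            ≤ (K * (‖h‖^2 ⊔ ‖h‖^3)) * (‖x - y‖ * m ‖h‖) :=
              mul_le_mul (hfb h) (hm_lip x y h) (abs_nonneg _)
                (mul_nonneg hK (supnn h))
          _ = (K * ‖x - y‖) * ((‖h‖^2 ⊔ ‖h‖^3) * m ‖h‖) := by ring
    _ = (K * ‖x - y‖) * ∫ h in S, (‖h‖^2 ⊔ ‖h‖^3) * m ‖h‖ := by
        rw [integral_const_mul]
    _ ≤ (K * ‖x - y‖) * I :=
        mul_le_mul_of_nonneg_left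
          (setIntegral_le_integral hm_int
            (Filter.Eventually.of_forall fun h => mul_nonneg (supnn h) (hm_nn _)))
          (mul_nonneg hK (norm_nonneg _))
    _ = K * I * ‖x - y‖ := by ring
end
end

section
/- Assume (H2). Then for every α > 0, the infimum over all x ∈ ℝ^d with ‖x‖ ≤ 1/α and all unit vectors u,v ∈ ℝ^d of ∫_{ℝ^d} |h·u|² |h·v| p(x,h) dh is strictly positive. -/
open MeasureTheory Real Set
open scoped RealInnerProductSpace ENNReal NNReal

noncomputable section

variable {d : ℕ}

/-! The integrand `|⟪h, u⟫|² |⟪h, v⟫| p(x, h)` vanishes only where `p(x, ·)` does or on the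
Lebesgue-null hyperplanes `u^⊥`, `v^⊥`, so each integral is positive because `p(x, ·)` has mass one.
Dominated convergence with the bound `‖u‖² ‖v‖ ‖h‖³ m(‖h‖)` makes the integral continuous in
`(x, u, v)`, and a positive continuous function has a positive minimum on the compact set
`‖x‖ ≤ 1/α, ‖u‖ = ‖v‖ = 1`. -/

section MixedAbsMoment

variable {X E : Type*} [NormedAddCommGroup E] [InnerProductSpace ℝ E]

lemma abs_inner_sq_mul_abs_inner_le (h u v : E) :
    |⟪h, u⟫| ^ 2 * |⟪h, v⟫| ≤ ‖u‖ ^ 2 * ‖v‖ * ‖h‖ ^ 3 := by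
  have hu : |⟪h, u⟫| ≤ ‖h‖ * ‖u‖ := abs_real_inner_le_norm h u
  have hv : |⟪h, v⟫| ≤ ‖h‖ * ‖v‖ := abs_real_inner_le_norm h v
  calc |⟪h, u⟫| ^ 2 * |⟪h, v⟫| ≤ (‖h‖ * ‖u‖) ^ 2 * (‖h‖ * ‖v‖) := by gcongr
    _ = ‖u‖ ^ 2 * ‖v‖ * ‖h‖ ^ 3 := by ring

variable [MeasurableSpace E]

def mixedAbsMoment (μ : Measure E) (p : X → E → ℝ) (x : X) (u v : E) : ℝ :=
  ∫ h, |⟪h, u⟫| ^ 2 * |⟪h, v⟫| * p x h ∂μ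

lemma ae_inner_ne_zero [BorelSpace E] [FiniteDimensional ℝ E] (μ : Measure E)
    [μ.IsAddHaarMeasure] {u : E} (hu : u ≠ 0) : ∀ᵐ h ∂μ, ⟪h, u⟫ ≠ 0 := by
  have hperp : (ℝ ∙ u)ᗮ ≠ ⊤ := by
    rwa [Ne, Submodule.orthogonal_eq_top_iff, Submodule.span_singleton_eq_bot]
  refine measure_mono_null (fun h hh => ?_) (Measure.addHaar_submodule μ _ hperp)
  simpa [Submodule.mem_orthogonal_singleton_iff_inner_right, real_inner_comm] using hh

lemma integral_mul_pos_of_ae_pos {α : Type*} [MeasurableSpace α] {μ : Measure α}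
    {g f : α → ℝ} (hg : ∀ᵐ a ∂μ, 0 < g a) (hf : 0 ≤ f) (hfi : Integrable f μ)
    (hf_pos : 0 < ∫ a, f a ∂μ) (hgf : Integrable (fun a => g a * f a) μ) :
    0 < ∫ a, g a * f a ∂μ := by
  have hgf_nonneg : 0 ≤ᵐ[μ] fun a => g a * f a := by
    filter_upwards [hg] with a ha using mul_nonneg ha.le (hf a)
  rw [integral_pos_iff_support_of_nonneg_ae hgf_nonneg hgf]
  rw [integral_pos_iff_support_of_nonneg hf hfi] at hf_pos
  refine hf_pos.trans_le (measure_mono_ae ?_)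
  filter_upwards [hg] with a ha hfa
  exact mul_ne_zero ha.ne' hfa

lemma mixedAbsMoment_pos [BorelSpace E] [FiniteDimensional ℝ E] (μ : Measure E)
    [μ.IsAddHaarMeasure] {p : X → E → ℝ} {x : X} (hp : 0 ≤ p x) (hpi : Integrable (p x) μ)
    (hp_pos : 0 < ∫ h, p x h ∂μ) {u v : E} (hu : u ≠ 0) (hv : v ≠ 0)
    (hint : Integrable (fun h => |⟪h, u⟫| ^ 2 * |⟪h, v⟫| * p x h) μ) :
    0 < mixedAbsMoment μ p x u v := by
  refine integral_mul_pos_of_ae_pos ?_ hp hpi hp_pos hint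
  filter_upwards [ae_inner_ne_zero μ hu, ae_inner_ne_zero μ hv] with h hhu hhv
  positivity

lemma integrable_mixedAbsMoment_integrand [OpensMeasurableSpace E] {μ : Measure E}
    {f w : E → ℝ} (hf : AEStronglyMeasurable f μ) (hfw : ∀ h, |f h| ≤ w h)
    (hw : Integrable (fun h => ‖h‖ ^ 3 * w h) μ) (u v : E) :
    Integrable (fun h => |⟪h, u⟫| ^ 2 * |⟪h, v⟫| * f h) μ := by
  refine (hw.const_mul (‖u‖ ^ 2 * ‖v‖)).mono' ?_ (ae_of_all _ fun h => ?_)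
  · exact (by fun_prop : Continuous fun h : E => |⟪h, u⟫| ^ 2 * |⟪h, v⟫|).aestronglyMeasurable.mul
      hf
  · rw [norm_mul, Real.norm_of_nonneg (by positivity), Real.norm_eq_abs, ← mul_assoc]
    exact mul_le_mul (abs_inner_sq_mul_abs_inner_le h u v) (hfw h) (abs_nonneg _) (by positivity)

lemma continuous_mixedAbsMoment [TopologicalSpace X] [FirstCountableTopology X]
    [OpensMeasurableSpace E] {μ : Measure E} {p : X → E → ℝ} {w : E → ℝ}
    (hp_meas : ∀ x, AEStronglyMeasurable (p x) μ) (hp_cont : ∀ h, Continuous fun x => p x h)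
    (hpw : ∀ x h, |p x h| ≤ w h) (hw : Integrable (fun h => ‖h‖ ^ 3 * w h) μ) :
    Continuous fun q : X × E × E => mixedAbsMoment μ p q.1 q.2.1 q.2.2 := by
  rw [continuous_iff_continuousAt]
  rintro ⟨x₀, u₀, v₀⟩
  set C := ‖u₀‖ ^ 2 * ‖v₀‖ + 1
  have hC : ∀ᶠ q : X × E × E in nhds (x₀, u₀, v₀), ‖q.2.1‖ ^ 2 * ‖q.2.2‖ < C :=
    (by fun_prop : Continuous fun q : X × E × E => ‖q.2.1‖ ^ 2 * ‖q.2.2‖).continuousAt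
      |>.eventually_lt continuousAt_const (lt_add_one _)
  refine continuousAt_of_dominated (bound := fun h => C * (‖h‖ ^ 3 * w h)) ?_ ?_
    (hw.const_mul C) (ae_of_all _ fun h => ?_)
  · exact .of_forall fun q =>
      (by fun_prop : Continuous fun h : E => |⟪h, q.2.1⟫| ^ 2 * |⟪h, q.2.2⟫|)
        |>.aestronglyMeasurable.mul (hp_meas q.1)
  · filter_upwards [hC] with q hq
    refine ae_of_all _ fun h => ?_
    have hw0 : 0 ≤ w h := (abs_nonneg _).trans (hpw q.1 h)
    rw [norm_mul, Real.norm_of_nonneg (by positivity), Real.norm_eq_abs]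
    calc |⟪h, q.2.1⟫| ^ 2 * |⟪h, q.2.2⟫| * |p q.1 h|
        ≤ ‖q.2.1‖ ^ 2 * ‖q.2.2‖ * ‖h‖ ^ 3 * w h :=
          mul_le_mul (abs_inner_sq_mul_abs_inner_le h _ _) (hpw q.1 h) (abs_nonneg _)
            (by positivity)
      _ ≤ C * (‖h‖ ^ 3 * w h) := by rw [mul_assoc]; gcongr
  · exact ((by fun_prop : Continuous fun q : X × E × E => |⟪h, q.2.1⟫| ^ 2 * |⟪h, q.2.2⟫|).mul
      ((hp_cont h).comp continuous_fst)).continuousAt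

end MixedAbsMoment

lemma integrable_norm_pow_three_mul {E : Type*} [NormedAddCommGroup E] [MeasurableSpace E]
    [OpensMeasurableSpace E] {μ : Measure E} {m : ℝ → ℝ} (hm : Measurable m) (hm0 : ∀ r, 0 ≤ m r)
    (hint : Integrable (fun h => (‖h‖ ^ 2 ⊔ ‖h‖ ^ 3) * m ‖h‖) μ) :
    Integrable (fun h => ‖h‖ ^ 3 * m ‖h‖) μ :=
  hint.mono' (by fun_prop) (ae_of_all _ fun h => by
    rw [norm_mul, Real.norm_of_nonneg (by positivity), Real.norm_of_nonneg (hm0 _)]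
    exact mul_le_mul_of_nonneg_right (le_max_right _ _) (hm0 _))

theorem stmt1_general {d : ℕ} (p : Euc d → Euc d → ℝ)
    (hker : IsMutKernel p) (hH2 : H2 p) :
    ∀ α : ℝ, 0 < α → ∃ c : ℝ, 0 < c ∧ ∀ x u v : Euc d,
      ‖x‖ ≤ 1 / α → ‖u‖ = 1 → ‖v‖ = 1 →
      c ≤ ∫ h : Euc d, |⟪h, u⟫| ^ 2 * |⟪h, v⟫| * p x h := by
  intro α _
  obtain ⟨hp_meas, hp_nonneg, hp_int, hp_one, -⟩ := hker
  obtain ⟨-, -, m, hm_meas, hm_nonneg, hm_int, hm_lip, hp_le⟩ := hH2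
  have hpx_meas (x : Euc d) : AEStronglyMeasurable (p x) :=
    (hp_meas.comp measurable_prodMk_left).aestronglyMeasurable
  have hpm (x h) : |p x h| ≤ m ‖h‖ := (abs_of_nonneg (hp_nonneg x h)).trans_le (hp_le x h)
  have hp_cont (h : Euc d) : Continuous fun x => p x h :=
    (LipschitzWith.of_dist_le' fun x y => by
      simpa only [Real.dist_eq, dist_eq_norm x y, mul_comm] using hm_lip x y h).continuous
  have hm3_int := integrable_norm_pow_three_mul (μ := volume) hm_meas hm_nonneg hm_int
  set K := Metric.closedBall (0 : Euc d) (1 / α) ×ˢ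
    (Metric.sphere (0 : Euc d) 1 ×ˢ Metric.sphere (0 : Euc d) 1)
  have hK : IsCompact K :=
    (isCompact_closedBall _ _).prod ((isCompact_sphere _ _).prod (isCompact_sphere _ _))
  have hpos : ∀ q ∈ K, 0 < mixedAbsMoment volume p q.1 q.2.1 q.2.2 := by
    rintro ⟨x, u, v⟩ ⟨-, hu, hv⟩
    exact mixedAbsMoment_pos volume (hp_nonneg x) (hp_int x) (hp_one x ▸ one_pos)
      (ne_zero_of_mem_unit_sphere ⟨u, hu⟩) (ne_zero_of_mem_unit_sphere ⟨v, hv⟩)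
      (integrable_mixedAbsMoment_integrand (hpx_meas x) (hpm x) hm3_int u v)
  obtain ⟨c, hc, hcK⟩ := hK.exists_forall_le'
    (continuous_mixedAbsMoment hpx_meas hp_cont hpm hm3_int).continuousOn hpos
  refine ⟨c, hc, fun x u v hx hu hv => hcK (x, u, v) ⟨?_, ?_, ?_⟩⟩
  · rwa [mem_closedBall_zero_iff]
  · rwa [mem_sphere_zero_iff_norm]
  · rwa [mem_sphere_zero_iff_norm]

theorem stmt1 {d : ℕ} (hd : 1 ≤ d) (p : Euc d → Euc d → ℝ)
    (hker : IsMutKernel p) (hH2 : H2 p) :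
    ∀ α : ℝ, 0 < α → ∃ c : ℝ, 0 < c ∧ ∀ x u v : Euc d,
      ‖x‖ ≤ 1 / α → ‖u‖ = 1 → ‖v‖ = 1 →
      c ≤ ∫ h : Euc d, |⟪h, u⟫| ^ 2 * |⟪h, v⟫| * p x h :=
  stmt1_general p hker hH2
end
end

section
/- Assume (H). Then the drift coefficient b and the diffusion matrix a are bounded and globally Lipschitz on ℝ^d (a with respect to any fixed matrix norm). -/
open MeasureTheory Real Set
open scoped RealInnerProductSpace ENNReal NNReal

noncomputable section

variable {d : ℕ}

/-!
Every entry of `b` and of `a` is an integral `∫ w(h) [∇₁g(x,x)·h]₊ p(x,h) dh` with a weight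
`|w(h)| ≤ ‖h‖` or `‖h‖²`. As `r ↦ [r]₊` is 1-Lipschitz, `x ↦ ∇₁g(x,x)` is bounded and Lipschitz,
and `p(x,·)` is dominated by `m(‖·‖)` and Lipschitz in `x` with constant `m(‖·‖)`, both the
integrand and its increments in `x` are dominated by multiples of the integrable function
`(‖h‖² ∨ ‖h‖³) m(‖h‖)`.
-/

lemma norm_le_sqrt_card_mul_of_abs_apply_le {ι : Type*} [Fintype ι] (v : EuclideanSpace ℝ ι)
    {c : ℝ} (hc : 0 ≤ c) (hv : ∀ i, |v i| ≤ c) : ‖v‖ ≤ √(Fintype.card ι) * c := by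
  rw [EuclideanSpace.norm_eq, ← Real.sqrt_sq hc, ← Real.sqrt_mul (Nat.cast_nonneg _)]
  gcongr
  calc ∑ i, ‖v i‖ ^ 2 ≤ ∑ _i : ι, c ^ 2 := by
        gcongr with i
        exact (Real.norm_eq_abs _).trans_le (hv i)
    _ = _ := by simp

section PositivePartIntegral

variable {E : Type*} [NormedAddCommGroup E] [InnerProductSpace ℝ E] {w q q' ρ F : E → ℝ}

lemma abs_max_inner_zero_le (G h : E) : |max ⟪G, h⟫ 0| ≤ ‖G‖ * ‖h‖ := by
  have := abs_max_sub_max_le_abs ⟪G, h⟫ 0 0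
  simp only [max_self, sub_zero] at this
  exact this.trans (abs_real_inner_le_norm G h)

lemma abs_max_inner_zero_sub_le (G G' h : E) :
    |max ⟪G, h⟫ 0 - max ⟪G', h⟫ 0| ≤ ‖G - G'‖ * ‖h‖ := by
  refine (abs_max_sub_max_le_abs _ _ _).trans ?_
  rw [← inner_sub_left]
  exact abs_real_inner_le_norm _ _

lemma abs_mul_max_inner_zero_mul_le (hq0 : ∀ h, 0 ≤ q h) (hqρ : ∀ h, q h ≤ ρ h)
    (hF : ∀ h, |w h| * ‖h‖ * ρ h ≤ F h) (G h : E) :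
    |w h * max ⟪G, h⟫ 0 * q h| ≤ ‖G‖ * F h :=
  calc |w h * max ⟪G, h⟫ 0 * q h| = |w h| * |max ⟪G, h⟫ 0| * q h := by
        rw [abs_mul, abs_mul, abs_of_nonneg (hq0 h)]
    _ ≤ |w h| * (‖G‖ * ‖h‖) * ρ h := by
        gcongr
        exacts [hq0 h, abs_max_inner_zero_le G h, hqρ h]
    _ = ‖G‖ * (|w h| * ‖h‖ * ρ h) := by ring
    _ ≤ ‖G‖ * F h := by gcongr; exact hF h

variable [MeasurableSpace E] {μ : Measure E}

lemma integrable_mul_max_inner_zero_mul [OpensMeasurableSpace E]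
    (hw : AEStronglyMeasurable w μ) (hq : AEStronglyMeasurable q μ)
    (hq0 : ∀ h, 0 ≤ q h) (hqρ : ∀ h, q h ≤ ρ h) (hF : ∀ h, |w h| * ‖h‖ * ρ h ≤ F h)
    (hFi : Integrable F μ) (G : E) :
    Integrable (fun h => w h * max ⟪G, h⟫ 0 * q h) μ := by
  refine (hFi.const_mul ‖G‖).mono' ?_ (.of_forall fun h => ?_)
  · have hG : Continuous fun h : E => max ⟪G, h⟫ 0 := by fun_prop
    exact (hw.mul hG.aestronglyMeasurable).mul hq
  · exact (Real.norm_eq_abs _).trans_le (abs_mul_max_inner_zero_mul_le hq0 hqρ hF G h)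

lemma abs_integral_mul_max_inner_zero_mul_le
    (hq0 : ∀ h, 0 ≤ q h) (hqρ : ∀ h, q h ≤ ρ h) (hF : ∀ h, |w h| * ‖h‖ * ρ h ≤ F h)
    (hFi : Integrable F μ) (G : E) :
    |∫ h, w h * max ⟪G, h⟫ 0 * q h ∂μ| ≤ ‖G‖ * ∫ h, F h ∂μ := by
  rw [← integral_const_mul]
  exact norm_integral_le_of_norm_le (hFi.const_mul _)
    (.of_forall fun h =>
      (Real.norm_eq_abs _).trans_le (abs_mul_max_inner_zero_mul_le hq0 hqρ hF G h))

lemma abs_integral_mul_max_inner_zero_mul_sub_le [OpensMeasurableSpace E]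
    (hw : AEStronglyMeasurable w μ) (hq : AEStronglyMeasurable q μ)
    (hq' : AEStronglyMeasurable q' μ) (hq0 : ∀ h, 0 ≤ q h) (hqρ : ∀ h, q h ≤ ρ h)
    (hq'0 : ∀ h, 0 ≤ q' h) (hq'ρ : ∀ h, q' h ≤ ρ h) {δ : ℝ} (hδ : 0 ≤ δ)
    (hqq' : ∀ h, |q h - q' h| ≤ δ * ρ h)
    (hF : ∀ h, |w h| * ‖h‖ * ρ h ≤ F h) (hFi : Integrable F μ) (G G' : E) :
    |(∫ h, w h * max ⟪G, h⟫ 0 * q h ∂μ) - ∫ h, w h * max ⟪G', h⟫ 0 * q' h ∂μ| ≤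
      (‖G - G'‖ + ‖G'‖ * δ) * ∫ h, F h ∂μ := by
  have hpt : ∀ h, |w h * max ⟪G, h⟫ 0 * q h - w h * max ⟪G', h⟫ 0 * q' h| ≤
      (‖G - G'‖ + ‖G'‖ * δ) * F h := fun h =>
    calc |w h * max ⟪G, h⟫ 0 * q h - w h * max ⟪G', h⟫ 0 * q' h|
        = |w h| * |(max ⟪G, h⟫ 0 - max ⟪G', h⟫ 0) * q h + max ⟪G', h⟫ 0 * (q h - q' h)| := by
          rw [← abs_mul]; ring_nf
      _ ≤ |w h| * (‖G - G'‖ * ‖h‖ * ρ h + ‖G'‖ * ‖h‖ * (δ * ρ h)) := by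
          gcongr
          refine (abs_add_le _ _).trans (add_le_add ?_ ?_) <;> rw [abs_mul]
          · rw [abs_of_nonneg (hq0 h)]
            gcongr
            exacts [hq0 h, abs_max_inner_zero_sub_le G G' h, hqρ h]
          · gcongr
            exacts [abs_max_inner_zero_le G' h, hqq' h]
      _ = (‖G - G'‖ + ‖G'‖ * δ) * (|w h| * ‖h‖ * ρ h) := by ring
      _ ≤ (‖G - G'‖ + ‖G'‖ * δ) * F h := by gcongr; exact hF h
  rw [← integral_sub (integrable_mul_max_inner_zero_mul hw hq hq0 hqρ hF hFi G)
    (integrable_mul_max_inner_zero_mul hw hq' hq'0 hq'ρ hF hFi G'), ← integral_const_mul]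
  exact norm_integral_le_of_norm_le (hFi.const_mul _)
    (.of_forall fun h => (Real.norm_eq_abs _).trans_le (hpt h))

end PositivePartIntegral

def fitnessMoment (g p : Euc d → Euc d → ℝ) (w : Euc d → ℝ) (x : Euc d) : ℝ :=
  ∫ h : Euc d, w h * max ⟪grad1 g x x, h⟫ 0 * p x h

lemma bCoeff_apply (g p : Euc d → Euc d → ℝ) (x : Euc d) (k : Fin d) :
    bCoeff g p x k = fitnessMoment g p (fun h => h k) x :=
  rfl

lemma aMat_apply (g p : Euc d → Euc d → ℝ) (x : Euc d) (k l : Fin d) :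
    aMat g p x k l = fitnessMoment g p (fun h => h k * h l) x := by
  simp only [aMat, fitnessMoment, Matrix.of_apply, real_inner_comm]

lemma abs_apply_mul_norm_le (h : Euc d) (k : Fin d) : |h k| * ‖h‖ ≤ ‖h‖ ^ 2 ⊔ ‖h‖ ^ 3 :=
  calc |h k| * ‖h‖ ≤ ‖h‖ * ‖h‖ := by gcongr; exact PiLp.norm_apply_le h k
    _ = ‖h‖ ^ 2 := (sq _).symm
    _ ≤ _ := le_max_left _ _

lemma abs_apply_mul_apply_mul_norm_le (h : Euc d) (k l : Fin d) :
    |h k * h l| * ‖h‖ ≤ ‖h‖ ^ 2 ⊔ ‖h‖ ^ 3 :=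
  calc |h k * h l| * ‖h‖ ≤ ‖h‖ * ‖h‖ * ‖h‖ := by
        rw [abs_mul]; gcongr <;> exact PiLp.norm_apply_le h _
    _ = ‖h‖ ^ 3 := by ring
    _ ≤ _ := le_max_right _ _

section FitnessMoment

variable {g p : Euc d → Euc d → ℝ} {m : ℝ → ℝ} {w : Euc d → ℝ}

lemma abs_fitnessMoment_le (hp0 : ∀ x h, 0 ≤ p x h) (hpm : ∀ x h, p x h ≤ m ‖h‖)
    (hm : Integrable fun h : Euc d => (‖h‖ ^ 2 ⊔ ‖h‖ ^ 3) * m ‖h‖)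
    (hw : ∀ h, |w h| * ‖h‖ ≤ ‖h‖ ^ 2 ⊔ ‖h‖ ^ 3) (x : Euc d) :
    |fitnessMoment g p w x| ≤ ‖grad1 g x x‖ * ∫ h : Euc d, (‖h‖ ^ 2 ⊔ ‖h‖ ^ 3) * m ‖h‖ :=
  abs_integral_mul_max_inner_zero_mul_le (hp0 x) (hpm x)
    (fun h => mul_le_mul_of_nonneg_right (hw h) ((hp0 h h).trans (hpm h h))) hm _

lemma abs_fitnessMoment_sub_le (hp : Measurable (Function.uncurry p))
    (hp0 : ∀ x h, 0 ≤ p x h) (hpm : ∀ x h, p x h ≤ m ‖h‖)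
    (hplip : ∀ x y h, |p x h - p y h| ≤ ‖x - y‖ * m ‖h‖)
    (hm : Integrable fun h : Euc d => (‖h‖ ^ 2 ⊔ ‖h‖ ^ 3) * m ‖h‖)
    (hwm : Measurable w) (hw : ∀ h, |w h| * ‖h‖ ≤ ‖h‖ ^ 2 ⊔ ‖h‖ ^ 3) (x y : Euc d) :
    |fitnessMoment g p w x - fitnessMoment g p w y| ≤
      (‖grad1 g x x - grad1 g y y‖ + ‖grad1 g y y‖ * ‖x - y‖) *
        ∫ h : Euc d, (‖h‖ ^ 2 ⊔ ‖h‖ ^ 3) * m ‖h‖ :=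
  abs_integral_mul_max_inner_zero_mul_sub_le hwm.aestronglyMeasurable
    (hp.comp measurable_prodMk_left).aestronglyMeasurable
    (hp.comp measurable_prodMk_left).aestronglyMeasurable (hp0 x) (hpm x) (hp0 y) (hpm y)
    (norm_nonneg _) (hplip x y)
    (fun h => mul_le_mul_of_nonneg_right (hw h) ((hp0 h h).trans (hpm h h))) hm _ _

end FitnessMoment

lemma H1.lipschitzWith_grad1_diag {g : Euc d → Euc d → ℝ} (hg : H1 g) :
    ∃ K : ℝ≥0, LipschitzWith K fun x : Euc d => grad1 g x x := by
  obtain ⟨-, -, ⟨K, hK⟩, -, -⟩ := hg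
  have hdiag : LipschitzWith (max 1 1) fun x : Euc d => (x, x) :=
    LipschitzWith.id.prodMk LipschitzWith.id
  exact ⟨K, by simpa [Function.comp_def] using hK.comp hdiag⟩

lemma exists_bound_lipschitz_fitnessMoment {g p : Euc d → Euc d → ℝ}
    (hker : IsMutKernel p) (hH1 : H1 g) (hH2 : H2 p) :
    ∃ C L : ℝ, 0 ≤ C ∧ 0 ≤ L ∧ ∀ w : Euc d → ℝ, Measurable w →
      (∀ h, |w h| * ‖h‖ ≤ ‖h‖ ^ 2 ⊔ ‖h‖ ^ 3) → ∀ x y : Euc d,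
        |fitnessMoment g p w x| ≤ C ∧
          |fitnessMoment g p w x - fitnessMoment g p w y| ≤ L * ‖x - y‖ := by
  obtain ⟨hp, hp0, -, -, -⟩ := hker
  obtain ⟨-, -, m, -, -, hm, hplip, hpm⟩ := hH2
  obtain ⟨K, hK⟩ := hH1.lipschitzWith_grad1_diag
  obtain ⟨-, ⟨C, hC⟩, -, -, -⟩ := hH1
  set I := ∫ h : Euc d, (‖h‖ ^ 2 ⊔ ‖h‖ ^ 3) * m ‖h‖
  have hI : 0 ≤ I := integral_nonneg fun h =>
    mul_nonneg ((sq_nonneg _).trans (le_max_left _ _)) ((hp0 h h).trans (hpm h h))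
  have hC0 : 0 ≤ C := (norm_nonneg _).trans (hC 0 0)
  refine ⟨C * I, (K + C) * I, by positivity, by positivity, fun w hwm hw x y => ⟨?_, ?_⟩⟩
  · exact (abs_fitnessMoment_le hp0 hpm hm hw x).trans (by gcongr; exact hC x x)
  · calc _ ≤ _ := abs_fitnessMoment_sub_le hp hp0 hpm hplip hm hwm hw x y
      _ ≤ (K * ‖x - y‖ + C * ‖x - y‖) * I := by
          gcongr
          exacts [hK.norm_sub_le x y, hC y y]
      _ = (K + C) * I * ‖x - y‖ := by ring

theorem stmt2_general {d : ℕ} (g p : Euc d → Euc d → ℝ)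
    (hker : IsMutKernel p) (hH1 : H1 g) (hH2 : H2 p) :
    ((∃ C : ℝ, ∀ x : Euc d, ‖bCoeff g p x‖ ≤ C) ∧
      (∃ L : ℝ≥0, LipschitzWith L (bCoeff g p))) ∧
    ((∃ C : ℝ, ∀ (x : Euc d) (k l : Fin d), |aMat g p x k l| ≤ C) ∧
      (∃ L : ℝ, 0 ≤ L ∧ ∀ (x y : Euc d) (k l : Fin d),
        |aMat g p x k l - aMat g p y k l| ≤ L * ‖x - y‖)) := by
  obtain ⟨C, L, hC, hL, hmoment⟩ := exists_bound_lipschitz_fitnessMoment hker hH1 hH2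
  have hb (k : Fin d) := hmoment (fun h => h k) (by fun_prop) (abs_apply_mul_norm_le · k)
  have ha (k l : Fin d) := hmoment (fun h => h k * h l) (by fun_prop)
    (abs_apply_mul_apply_mul_norm_le · k l)
  refine ⟨⟨⟨√d * C, fun x => ?_⟩, ⟨(√d * L).toNNReal, .of_dist_le_mul fun x y => ?_⟩⟩,
    ⟨C, fun x k l => ?_⟩, L, hL, fun x y k l => ?_⟩
  · simpa using norm_le_sqrt_card_mul_of_abs_apply_le (bCoeff g p x) hC fun k => by
      simpa only [bCoeff_apply] using (hb k x x).1
  · rw [dist_eq_norm, dist_eq_norm, Real.coe_toNNReal _ (by positivity), mul_assoc]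
    simpa using norm_le_sqrt_card_mul_of_abs_apply_le (bCoeff g p x - bCoeff g p y)
      (by positivity) fun k => by simpa only [PiLp.sub_apply, bCoeff_apply] using (hb k x y).2
  · simpa only [aMat_apply] using (ha k l x x).1
  · simpa only [aMat_apply] using (ha k l x y).2

theorem stmt2 {d : ℕ} (hd : 1 ≤ d) (g p : Euc d → Euc d → ℝ)
    (hker : IsMutKernel p) (hH1 : H1 g) (hH2 : H2 p) :
    ((∃ C : ℝ, ∀ x : Euc d, ‖bCoeff g p x‖ ≤ C) ∧
      (∃ L : ℝ≥0, LipschitzWith L (bCoeff g p))) ∧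
    ((∃ C : ℝ, ∀ (x : Euc d) (k l : Fin d), |aMat g p x k l| ≤ C) ∧
      (∃ L : ℝ, 0 ≤ L ∧ ∀ (x y : Euc d) (k l : Fin d),
        |aMat g p x k l - aMat g p y k l| ≤ L * ‖x - y‖)) :=
  stmt2_general g p hker hH1 hH2
end
end

section
/- Assume (H). Then b̃ is bounded on ℝ^d, and b̃ is Lipschitz on every convex compact subset of ℝ^d \ Γ; in particular b̃ is locally Lipschitz on ℝ^d \ Γ. -/
open MeasureTheory Real Set
open scoped RealInnerProductSpace ENNReal NNReal

noncomputable section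

variable {d : ℕ}

/-!
The integrand of `b̃(x)` is dominated by `‖h‖³ m(‖h‖)`, which gives boundedness. The half-space
`{h | 0 < ⟪h, ∇₁g(x,x)⟫}` over which it is integrated moves with `x`, but the half-spaces of two
vectors `v`, `v'` differ only inside the double cone `{h | |⟪h, v⟫| ≤ ‖v - v'‖ ‖h‖}`. In polar
coordinates a radial weight gives this cone a mass proportional to the volume of its intersection
with the unit ball, and that intersection lies in a slab of width `2 ‖v - v'‖ / ‖v‖`. Since `∇₁g`
is Lipschitz, this is `O(‖x - y‖ / δ)` wherever `‖∇₁g(x,x)‖ ≥ δ`, and on a compact set avoiding `Γ`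
the continuous function `‖∇₁g(x,x)‖` is bounded below by some `δ > 0`.
-/

open Metric

section PolarCoordinates

variable {E : Type*} [NormedAddCommGroup E] [NormedSpace ℝ E] [FiniteDimensional ℝ E]
  [MeasurableSpace E] [BorelSpace E] (μ : Measure E) [μ.IsAddHaarMeasure]

theorem setLIntegral_comp_norm_eq_toSphere_mul [Nontrivial E] {G : ℝ → ℝ≥0∞}
    (hG : Measurable G) {P : Set E} (hP : MeasurableSet P)
    (hcone : ∀ t : ℝ, 0 < t → ∀ x, t • x ∈ P ↔ x ∈ P) :
    ∫⁻ x in P, G ‖x‖ ∂μ = μ.toSphere {θ | (θ : E) ∈ P} *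
      ∫⁻ r, G r ∂(Measure.volumeIoiPow (Module.finrank ℝ E - 1)) := by
  have hS : MeasurableSet {θ : sphere (0 : E) 1 | (θ : E) ∈ P} :=
    hP.preimage measurable_subtype_coe
  calc ∫⁻ x in P, G ‖x‖ ∂μ
      = ∫⁻ x : ({0}ᶜ : Set E), P.indicator (G ‖·‖) x ∂(μ.comap (↑)) := by
        rw [lintegral_subtype_comap (measurableSet_singleton _).compl, restrict_compl_singleton,
          lintegral_indicator hP]
    _ = ∫⁻ y, {θ : sphere (0 : E) 1 | (θ : E) ∈ P}.indicator 1 y.1 * G y.2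
          ∂(μ.toSphere.prod (Measure.volumeIoiPow (Module.finrank ℝ E - 1))) := by
        rw [← (μ.measurePreserving_homeomorphUnitSphereProd).lintegral_comp_emb
          (Homeomorph.measurableEmbedding _)]
        refine lintegral_congr fun x => ?_
        have hx : 0 < ‖(x : E)‖ := norm_pos_iff.2 x.2
        by_cases hxP : (x : E) ∈ P
        · have : ‖(x : E)‖⁻¹ • (x : E) ∈ P := (hcone _ (inv_pos.2 hx) _).2 hxP
          simp [indicator_of_mem hxP, this]
        · have : ‖(x : E)‖⁻¹ • (x : E) ∉ P := fun h => hxP ((hcone _ (inv_pos.2 hx) _).1 h)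
          simp [indicator_of_notMem hxP, this]
    _ = _ := by
        rw [lintegral_prod_mul (g := fun r : Ioi (0 : ℝ) => G r)
          (measurable_one.indicator hS).aemeasurable (hG.comp measurable_subtype_coe).aemeasurable,
          lintegral_indicator_one hS]

theorem setLIntegral_comp_norm_mul_measure_ball [Nontrivial E] {G : ℝ → ℝ≥0∞}
    (hG : Measurable G) {P : Set E} (hP : MeasurableSet P)
    (hcone : ∀ t : ℝ, 0 < t → ∀ x, t • x ∈ P ↔ x ∈ P) :
    (∫⁻ x in P, G ‖x‖ ∂μ) * μ (ball 0 1) = μ (P ∩ ball 0 1) * ∫⁻ x, G ‖x‖ ∂μ := by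
  have hball : ∀ Q : Set E, MeasurableSet Q →
      ∫⁻ x in Q, (Iio (1 : ℝ)).indicator (1 : ℝ → ℝ≥0∞) ‖x‖ ∂μ = μ (Q ∩ ball 0 1) := fun Q hQ => by
    have : (fun x : E => (Iio (1 : ℝ)).indicator (1 : ℝ → ℝ≥0∞) ‖x‖) =
        (ball (0 : E) 1).indicator 1 := by
      ext x; simp only [indicator, mem_Iio, mem_ball_zero_iff, Pi.one_apply]
    rw [this, lintegral_indicator_one measurableSet_ball, Measure.restrict_apply measurableSet_ball,
      inter_comm]
  -- Comparing with the weight `1_{[0,1)}` and with `P = univ` eliminates the sphere measure of `P`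
  -- and the radial integral of `G`.
  have hG₀ : Measurable ((Iio (1 : ℝ)).indicator (1 : ℝ → ℝ≥0∞)) :=
    measurable_one.indicator measurableSet_Iio
  have hP₁ := setLIntegral_comp_norm_eq_toSphere_mul μ hG hP hcone
  have hP₀ := setLIntegral_comp_norm_eq_toSphere_mul μ hG₀ hP hcone
  have hU₁ := setLIntegral_comp_norm_eq_toSphere_mul μ hG MeasurableSet.univ (by simp)
  have hU₀ := setLIntegral_comp_norm_eq_toSphere_mul μ hG₀ MeasurableSet.univ (by simp)
  rw [hball P hP] at hP₀
  rw [hball univ MeasurableSet.univ, univ_inter] at hU₀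
  rw [Measure.restrict_univ] at hU₁
  rw [hP₁, hP₀, hU₀, hU₁]
  ring

end PolarCoordinates

section Sector

variable {E : Type*} [NormedAddCommGroup E] [InnerProductSpace ℝ E] [FiniteDimensional ℝ E]
  [MeasurableSpace E] [BorelSpace E]

theorem volume_ball_inter_abs_inner_le {u : E} (hu : ‖u‖ = 1) (ε : ℝ) :
    volume (ball (0 : E) 1 ∩ {x | |⟪x, u⟫| ≤ ε}) ≤
      2 ^ Module.finrank ℝ E * ENNReal.ofReal ε := by
  set n := Module.finrank ℝ E
  have : Nontrivial E := nontrivial_of_ne u 0 (norm_ne_zero_iff.1 (by simp [hu]))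
  let i₀ : Fin n := ⟨0, Module.finrank_pos⟩
  have hu' : Orthonormal ℝ (({i₀} : Set (Fin n)).domRestrict fun _ => u) :=
    ⟨fun _ => hu, fun i j hij => absurd (Subtype.ext (i.2.trans j.2.symm)) hij⟩
  -- In an orthonormal basis starting with `u`, the set lies in the box `[-ε, ε] × [-1, 1]ⁿ⁻¹`.
  obtain ⟨b, hb⟩ := hu'.exists_orthonormalBasis_extension_of_card_eq (by simp [n])
  let r : Fin n → ℝ := fun i => if i = i₀ then ε else 1
  let box : Set (Fin n → ℝ) := univ.pi fun i => Icc (-r i) (r i)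
  have hmp : MeasurePreserving (fun x => (b.repr x).ofLp) :=
    (EuclideanSpace.volume_preserving_symm_measurableEquiv_toLp _).comp b.measurePreserving_repr
  have hsub : ball (0 : E) 1 ∩ {x | |⟪x, u⟫| ≤ ε} ⊆ (fun x => (b.repr x).ofLp) ⁻¹' box := by
    rintro x ⟨hx1, hx2⟩ i -
    rw [mem_Icc, ← abs_le]
    change |(b.repr x).ofLp i| ≤ r i
    rw [b.repr_apply_apply, real_inner_comm]
    by_cases hi : i = i₀
    · simpa [r, hi, hb i₀ rfl] using hx2
    · simp only [r, if_neg hi]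
      exact (abs_real_inner_le_norm x (b i)).trans (by simpa using (mem_ball_zero_iff.1 hx1).le)
  calc volume (ball (0 : E) 1 ∩ {x | |⟪x, u⟫| ≤ ε})
      ≤ volume box := (measure_mono hsub).trans_eq
        (hmp.measure_preimage (MeasurableSet.univ_pi fun _ => measurableSet_Icc).nullMeasurableSet)
    _ = ∏ i, (2 * ENNReal.ofReal (r i)) := by
        rw [volume_pi_pi]
        refine Finset.prod_congr rfl fun i _ => ?_
        rw [Real.volume_Icc, sub_neg_eq_add, ← two_mul, ENNReal.ofReal_mul zero_le_two,
          ENNReal.ofReal_ofNat]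
    _ = 2 ^ n * ENNReal.ofReal ε := by
        rw [Finset.prod_mul_distrib, Finset.prod_const, Finset.card_univ, Fintype.card_fin]
        simp only [r, apply_ite, ENNReal.ofReal_one, Fintype.prod_ite_eq']

theorem setLIntegral_abs_inner_le_mul_norm_mul_measure_ball_le {G : ℝ → ℝ≥0∞}
    (hG : Measurable G) {v : E} (hv : v ≠ 0) {t : ℝ} (ht : 0 ≤ t) :
    (∫⁻ x in {x | |⟪x, v⟫| ≤ t * ‖x‖}, G ‖x‖) * volume (ball (0 : E) 1) ≤
      2 ^ Module.finrank ℝ E * ENNReal.ofReal (t / ‖v‖) * ∫⁻ x : E, G ‖x‖ := by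
  have : Nontrivial E := nontrivial_of_ne v 0 hv
  have hv₀ : 0 < ‖v‖ := norm_pos_iff.2 hv
  have hP : MeasurableSet {x : E | |⟪x, v⟫| ≤ t * ‖x‖} :=
    measurableSet_le (by fun_prop) (by fun_prop)
  have hcone : ∀ s : ℝ, 0 < s → ∀ x : E, s • x ∈ {x : E | |⟪x, v⟫| ≤ t * ‖x‖} ↔
      x ∈ {x : E | |⟪x, v⟫| ≤ t * ‖x‖} := fun s hs x => by
    simp only [mem_ofPred_eq, real_inner_smul_left, norm_smul, abs_mul, Real.norm_eq_abs,
      abs_of_pos hs, mul_left_comm t s]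
    exact mul_le_mul_iff_right₀ hs
  have hsub : {x : E | |⟪x, v⟫| ≤ t * ‖x‖} ∩ ball 0 1 ⊆
      ball 0 1 ∩ {x | |⟪x, ‖v‖⁻¹ • v⟫| ≤ t / ‖v‖} := by
    rintro x ⟨hxv, hx⟩
    have hx1 : ‖x‖ ≤ 1 := (mem_ball_zero_iff.1 hx).le
    refine ⟨hx, ?_⟩
    rw [mem_ofPred_eq, real_inner_smul_right, abs_mul, abs_inv, abs_norm, inv_mul_le_iff₀ hv₀,
      mul_div_cancel₀ _ hv₀.ne']
    exact hxv.trans (mul_le_of_le_one_right ht hx1)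
  rw [setLIntegral_comp_norm_mul_measure_ball volume hG hP hcone]
  gcongr
  exact (measure_mono hsub).trans (volume_ball_inter_abs_inner_le (by simp [norm_smul, hv₀.ne']) _)

theorem setIntegral_abs_inner_le_mul_norm_mul_measureReal_ball_le {w : ℝ → ℝ}
    (hwm : Measurable w) (hw₀ : ∀ r, 0 ≤ r → 0 ≤ w r) (hw : Integrable fun x : E => w ‖x‖)
    {v : E} (hv : v ≠ 0) {t : ℝ} (ht : 0 ≤ t) :
    (∫ x in {x | |⟪x, v⟫| ≤ t * ‖x‖}, w ‖x‖) * volume.real (ball (0 : E) 1) ≤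
      2 ^ Module.finrank ℝ E * (t / ‖v‖) * ∫ x : E, w ‖x‖ := by
  have hlin := setLIntegral_abs_inner_le_mul_norm_mul_measure_ball_le
    (ENNReal.measurable_ofReal.comp hwm) hv ht
  have hfin :
      2 ^ Module.finrank ℝ E * ENNReal.ofReal (t / ‖v‖) * ∫⁻ x : E, ENNReal.ofReal (w ‖x‖) ≠ ∞ := by
    have := hw.lintegral_lt_top
    finiteness
  have hw₀' : ∀ x : E, 0 ≤ w ‖x‖ := fun x => hw₀ _ (norm_nonneg x)
  rw [integral_eq_lintegral_of_nonneg_ae (.of_forall hw₀') hw.aestronglyMeasurable,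
    integral_eq_lintegral_of_nonneg_ae (.of_forall hw₀') hw.aestronglyMeasurable.restrict,
    measureReal_def, ← ENNReal.toReal_mul]
  convert ENNReal.toReal_mono hfin hlin using 1
  · rfl
  · rw [ENNReal.toReal_mul, ENNReal.toReal_mul, ENNReal.toReal_pow,
      ENNReal.toReal_ofReal (by positivity)]
    rfl

end Sector

theorem abs_le_abs_sub_of_mul_nonpos {a b : ℝ} (h : a * b ≤ 0) : |a| ≤ |a - b| :=
  sq_le_sq.1 (by nlinarith [sq_nonneg b])

section HalfSpace

variable {E F : Type*} [NormedAddCommGroup E] [InnerProductSpace ℝ E] [NormedAddCommGroup F]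

theorem abs_inner_le_norm_sub_mul_of_mul_nonpos {x v v' : E} (h : ⟪x, v⟫ * ⟪x, v'⟫ ≤ 0) :
    |⟪x, v⟫| ≤ ‖v - v'‖ * ‖x‖ :=
  calc |⟪x, v⟫| ≤ |⟪x, v⟫ - ⟪x, v'⟫| := abs_le_abs_sub_of_mul_nonpos h
    _ = |⟪x, v - v'⟫| := by rw [inner_sub_right]
    _ ≤ ‖v - v'‖ * ‖x‖ := (abs_real_inner_le_norm x _).trans_eq (mul_comm _ _)

theorem norm_indicator_inner_pos_sub_le {f f' : E → F} {w : E → ℝ} (hf : ∀ x, ‖f x‖ ≤ w x)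
    (hf' : ∀ x, ‖f' x‖ ≤ w x) (v v' x : E) :
    ‖{x | 0 < ⟪x, v⟫}.indicator f x - {x | 0 < ⟪x, v'⟫}.indicator f' x‖ ≤
      {x | |⟪x, v⟫| ≤ ‖v - v'‖ * ‖x‖}.indicator w x + ‖f x - f' x‖ := by
  have hw : 0 ≤ {x | |⟪x, v⟫| ≤ ‖v - v'‖ * ‖x‖}.indicator w x :=
    indicator_nonneg (fun x _ => (norm_nonneg _).trans (hf x)) x
  by_cases hv : 0 < ⟪x, v⟫ <;> by_cases hv' : 0 < ⟪x, v'⟫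
  · simpa [indicator_apply, hv, hv'] using hw
  · have hx : |⟪x, v⟫| ≤ ‖v - v'‖ * ‖x‖ := abs_inner_le_norm_sub_mul_of_mul_nonpos
      (mul_nonpos_of_nonneg_of_nonpos hv.le (not_lt.1 hv'))
    simpa [indicator_apply, hv, hv', hx] using
      (hf x).trans (le_add_of_nonneg_right (norm_nonneg _))
  · have hx : |⟪x, v⟫| ≤ ‖v - v'‖ * ‖x‖ := abs_inner_le_norm_sub_mul_of_mul_nonpos
      (mul_nonpos_of_nonpos_of_nonneg (not_lt.1 hv) hv'.le)
    simpa [indicator_apply, hv, hv', hx] using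
      (hf' x).trans (le_add_of_nonneg_right (norm_nonneg _))
  · simpa [indicator_apply, hv, hv'] using add_nonneg hw (norm_nonneg (f x - f' x))

variable [MeasurableSpace E] [OpensMeasurableSpace E] [NormedSpace ℝ F] {μ : Measure E}

theorem norm_setIntegral_inner_pos_sub_le {f f' : E → F} {w : E → ℝ} (hf : Integrable f μ)
    (hf' : Integrable f' μ) (hw : Integrable w μ) (hfw : ∀ x, ‖f x‖ ≤ w x)
    (hf'w : ∀ x, ‖f' x‖ ≤ w x) (v v' : E) :
    ‖∫ x in {x | 0 < ⟪x, v⟫}, f x ∂μ - ∫ x in {x | 0 < ⟪x, v'⟫}, f' x ∂μ‖ ≤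
      ∫ x in {x | |⟪x, v⟫| ≤ ‖v - v'‖ * ‖x‖}, w x ∂μ + ∫ x, ‖f x - f' x‖ ∂μ := by
  have hA : ∀ v : E, MeasurableSet {x : E | 0 < ⟪x, v⟫} := fun v =>
    measurableSet_lt measurable_const (by fun_prop)
  have hB : MeasurableSet {x : E | |⟪x, v⟫| ≤ ‖v - v'‖ * ‖x‖} :=
    measurableSet_le (by fun_prop) (by fun_prop)
  rw [← integral_indicator (hA v), ← integral_indicator (hA v'), ← integral_indicator hB,
    ← integral_sub (hf.indicator (hA v)) (hf'.indicator (hA v')),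
    ← integral_add (hw.indicator hB) (hf.sub hf').norm (g := fun x => ‖f x - f' x‖)]
  exact norm_integral_le_of_norm_le ((hw.indicator hB).add (hf.sub hf').norm)
    (.of_forall (norm_indicator_inner_pos_sub_le hfw hf'w v v'))

end HalfSpace

theorem LipschitzWith.comp_diag {α β : Type*} [PseudoEMetricSpace α] [PseudoEMetricSpace β]
    {K : ℝ≥0} {f : α × α → β} (hf : LipschitzWith K f) : LipschitzWith K fun x => f (x, x) := by
  simpa [Function.comp_def] using hf.comp (LipschitzWith.id.prodMk LipschitzWith.id)

theorem ContinuousLinearMap.abs_apply_apply_self_le {E : Type*} [SeminormedAddCommGroup E]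
    [NormedSpace ℝ E] (B : E →L[ℝ] E →L[ℝ] ℝ) (h : E) : |B h h| ≤ ‖B‖ * ‖h‖ ^ 2 := by
  simpa [sq, mul_assoc] using B.le_opNorm₂ h h

section Drift

variable {g p : Euc d → Euc d → ℝ}

def btIntegrand (g p : Euc d → Euc d → ℝ) (x h : Euc d) : Euc d :=
  (hess11 g x x h h * p x h) • h

theorem norm_btIntegrand_le {x h : Euc d} {M : ℝ} (hp₀ : 0 ≤ p x h) (hpM : p x h ≤ M) :
    ‖btIntegrand g p x h‖ ≤ ‖hess11 g x x‖ * (‖h‖ ^ 3 * M) := by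
  have hB := (hess11 g x x).abs_apply_apply_self_le h
  rw [btIntegrand, norm_smul, Real.norm_eq_abs, abs_mul, abs_of_nonneg hp₀]
  calc |hess11 g x x h h| * p x h * ‖h‖ ≤ ‖hess11 g x x‖ * ‖h‖ ^ 2 * M * ‖h‖ := by gcongr
    _ = ‖hess11 g x x‖ * (‖h‖ ^ 3 * M) := by ring

theorem norm_btIntegrand_sub_le {x y h : Euc d} {M D : ℝ} (hp₀ : 0 ≤ p x h) (hpM : p x h ≤ M)
    (hpD : |p x h - p y h| ≤ D) :
    ‖btIntegrand g p x h - btIntegrand g p y h‖ ≤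
      ‖hess11 g x x - hess11 g y y‖ * (‖h‖ ^ 3 * M) + ‖hess11 g y y‖ * (‖h‖ ^ 3 * D) := by
  have hsplit : btIntegrand g p x h - btIntegrand g p y h =
      ((hess11 g x x - hess11 g y y) h h * p x h + hess11 g y y h h * (p x h - p y h)) • h := by
    simp only [btIntegrand, ← sub_smul, sub_apply]
    ring_nf
  rw [hsplit, norm_smul, Real.norm_eq_abs]
  calc |(hess11 g x x - hess11 g y y) h h * p x h + hess11 g y y h h * (p x h - p y h)| * ‖h‖
      ≤ (|(hess11 g x x - hess11 g y y) h h| * p x h + |hess11 g y y h h| * |p x h - p y h|) *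
          ‖h‖ := by
        gcongr
        exact (abs_add_le _ _).trans_eq (by rw [abs_mul, abs_mul, abs_of_nonneg hp₀])
    _ ≤ (‖hess11 g x x - hess11 g y y‖ * ‖h‖ ^ 2 * M + ‖hess11 g y y‖ * ‖h‖ ^ 2 * D) * ‖h‖ := by
        gcongr <;> exact ContinuousLinearMap.abs_apply_apply_self_le _ h
    _ = _ := by ring

theorem integrable_btIntegrand {x : Euc d} {m : ℝ → ℝ} (hp : Measurable (p x))
    (hp₀ : ∀ h, 0 ≤ p x h) (hpm : ∀ h, p x h ≤ m ‖h‖)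
    (hm : Integrable fun h : Euc d => ‖h‖ ^ 3 * m ‖h‖) : Integrable (btIntegrand g p x) :=
  (hm.const_mul ‖hess11 g x x‖).mono' (by unfold btIntegrand; fun_prop)
    (.of_forall fun h => norm_btIntegrand_le (hp₀ h) (hpm h))

theorem btCoeff_eq_smul_setIntegral {x : Euc d} (hF : Integrable (btIntegrand g p x)) :
    btCoeff g p x = (1 / 2 : ℝ) • ∫ h in {h | 0 < ⟪h, grad1 g x x⟫}, btIntegrand g p x h := by
  ext k
  have hk := (EuclideanSpace.proj (𝕜 := ℝ) k).integral_comp_comm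
    (hF.restrict (s := {h | 0 < ⟪h, grad1 g x x⟫}))
  simp only [EuclideanSpace.coe_proj] at hk
  rw [PiLp.smul_apply, smul_eq_mul, ← hk]
  simp only [btCoeff, btIntegrand, PiLp.smul_apply, smul_eq_mul]
  change 1 / 2 * _ = 1 / 2 * _
  exact congrArg _ (integral_congr_ae (.of_forall fun h => by ring))

theorem norm_btCoeff_le {x : Euc d} {w : Euc d → ℝ} (hF : Integrable (btIntegrand g p x))
    (hw : Integrable w) (hFw : ∀ h, ‖btIntegrand g p x h‖ ≤ w h) :
    ‖btCoeff g p x‖ ≤ 1 / 2 * ∫ h, w h := by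
  rw [btCoeff_eq_smul_setIntegral hF, norm_smul, Real.norm_of_nonneg (by norm_num)]
  gcongr
  exact (norm_integral_le_of_norm_le hw.restrict (.of_forall hFw)).trans
    (setIntegral_le_integral hw (.of_forall fun h => (norm_nonneg _).trans (hFw h)))

theorem norm_btCoeff_sub_le {x y : Euc d} {w : Euc d → ℝ} (hFx : Integrable (btIntegrand g p x))
    (hFy : Integrable (btIntegrand g p y)) (hw : Integrable w)
    (hFxw : ∀ h, ‖btIntegrand g p x h‖ ≤ w h) (hFyw : ∀ h, ‖btIntegrand g p y h‖ ≤ w h) :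
    ‖btCoeff g p x - btCoeff g p y‖ ≤ 1 / 2 *
      ((∫ h in {h | |⟪h, grad1 g x x⟫| ≤ ‖grad1 g x x - grad1 g y y‖ * ‖h‖}, w h) +
        ∫ h, ‖btIntegrand g p x h - btIntegrand g p y h‖) := by
  rw [btCoeff_eq_smul_setIntegral hFx, btCoeff_eq_smul_setIntegral hFy, ← smul_sub, norm_smul,
    Real.norm_of_nonneg (by norm_num)]
  gcongr
  exact norm_setIntegral_inner_pos_sub_le hFx hFy hw hFxw hFyw _ _

theorem exists_btIntegrand_bounds (hker : IsMutKernel p) (hH1 : H1 g) (hH2 : H2 p) :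
    ∃ (w : ℝ → ℝ) (C K : ℝ), Measurable w ∧ (∀ r, 0 ≤ r → 0 ≤ w r) ∧ 0 ≤ C ∧
      Integrable (fun h : Euc d => w ‖h‖) ∧ (∀ x, Integrable (btIntegrand g p x)) ∧
      (∀ x h, ‖btIntegrand g p x h‖ ≤ C * w ‖h‖) ∧
      ∀ x y h, ‖btIntegrand g p x h - btIntegrand g p y h‖ ≤ K * ‖x - y‖ * w ‖h‖ := by
  obtain ⟨hp, hp₀, -, -, -⟩ := hker
  obtain ⟨-, -, -, ⟨C, hC⟩, ⟨K, hK⟩⟩ := hH1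
  obtain ⟨-, -, m, hm, hm₀, hmint, hpLip, hpm⟩ := hH2
  have hw : Integrable fun h : Euc d => ‖h‖ ^ 3 * m ‖h‖ :=
    hmint.mono' (by fun_prop) (.of_forall fun h => by
      rw [Real.norm_of_nonneg (by positivity [hm₀ ‖h‖])]
      exact mul_le_mul_of_nonneg_right (le_max_right _ _) (hm₀ _))
  have hHK : ∀ x y, ‖hess11 g x x - hess11 g y y‖ ≤ K * ‖x - y‖ := fun x y => by
    simpa [dist_eq_norm] using hK.comp_diag.dist_le_mul x y
  refine ⟨fun r => r ^ 3 * m r, C, K + C, (measurable_id.pow_const 3).mul hm,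
    fun r _ => mul_nonneg (by positivity) (hm₀ r), (norm_nonneg (hess11 g 0 0)).trans (hC 0 0),
    hw, fun x => integrable_btIntegrand (hp.comp measurable_prodMk_left) (hp₀ x) (hpm x) hw,
    fun x h => ?_, fun x y h => ?_⟩
  · exact (norm_btIntegrand_le (hp₀ x h) (hpm x h)).trans
      (mul_le_mul_of_nonneg_right (hC x x) (mul_nonneg (by positivity) (hm₀ _)))
  · calc ‖btIntegrand g p x h - btIntegrand g p y h‖
        ≤ ‖hess11 g x x - hess11 g y y‖ * (‖h‖ ^ 3 * m ‖h‖) +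
            ‖hess11 g y y‖ * (‖h‖ ^ 3 * (‖x - y‖ * m ‖h‖)) :=
          norm_btIntegrand_sub_le (hp₀ x h) (hpm x h) (hpLip x y h)
      _ ≤ K * ‖x - y‖ * (‖h‖ ^ 3 * m ‖h‖) + C * (‖h‖ ^ 3 * (‖x - y‖ * m ‖h‖)) := by
          have : 0 ≤ ‖h‖ ^ 3 * m ‖h‖ := mul_nonneg (by positivity) (hm₀ _)
          have : 0 ≤ ‖h‖ ^ 3 * (‖x - y‖ * m ‖h‖) :=
            mul_nonneg (by positivity) (mul_nonneg (norm_nonneg _) (hm₀ _))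
          gcongr
          exacts [hHK x y, hC y y]
      _ = (K + C) * ‖x - y‖ * (‖h‖ ^ 3 * m ‖h‖) := by ring

theorem exists_norm_btCoeff_le (hker : IsMutKernel p) (hH1 : H1 g) (hH2 : H2 p) :
    ∃ B : ℝ, ∀ x, ‖btCoeff g p x‖ ≤ B := by
  obtain ⟨w, C, -, -, -, -, hw, hF, hFC, -⟩ := exists_btIntegrand_bounds hker hH1 hH2
  exact ⟨1 / 2 * ∫ h : Euc d, C * w ‖h‖, fun x => norm_btCoeff_le (hF x) (hw.const_mul C) (hFC x)⟩

theorem exists_lipschitzOnWith_btCoeff (hker : IsMutKernel p) (hH1 : H1 g) (hH2 : H2 p) {δ : ℝ}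
    (hδ : 0 < δ) : ∃ L : ℝ≥0, LipschitzOnWith L (btCoeff g p) {x | δ ≤ ‖grad1 g x x‖} := by
  obtain ⟨w, C, K, hwm, hw₀, hC, hw, hF, hFC, hFK⟩ := exists_btIntegrand_bounds hker hH1 hH2
  obtain ⟨Kg, hKg⟩ := hH1.2.2.1
  set S := ∫ h : Euc d, w ‖h‖
  set V := volume.real (ball (0 : Euc d) 1)
  have hV : 0 < V := ENNReal.toReal_pos (measure_ball_pos _ _ one_pos).ne' measure_ball_lt_top.ne
  refine ⟨Real.toNNReal (1 / 2 * (C * (2 ^ Module.finrank ℝ (Euc d) * (Kg / δ) * S / V) + K * S)),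
    LipschitzOnWith.of_dist_le' fun x (hx : δ ≤ _) y _ => ?_⟩
  have hv : grad1 g x x ≠ 0 := norm_pos_iff.1 (hδ.trans_le hx)
  have hvKg : ‖grad1 g x x - grad1 g y y‖ ≤ Kg * ‖x - y‖ := by
    simpa [dist_eq_norm] using hKg.comp_diag.dist_le_mul x y
  have hsector : ∫ h in {h | |⟪h, grad1 g x x⟫| ≤ ‖grad1 g x x - grad1 g y y‖ * ‖h‖}, w ‖h‖ ≤
      2 ^ Module.finrank ℝ (Euc d) * (Kg / δ) * S / V * ‖x - y‖ := by
    rw [div_mul_eq_mul_div, le_div_iff₀ hV]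
    refine (setIntegral_abs_inner_le_mul_norm_mul_measureReal_ball_le hwm hw₀ hw hv
      (norm_nonneg _)).trans ?_
    have : ‖grad1 g x x - grad1 g y y‖ / ‖grad1 g x x‖ ≤ Kg / δ * ‖x - y‖ := by
      rw [div_mul_eq_mul_div]
      exact div_le_div₀ (by positivity) hvKg hδ hx
    have hS : 0 ≤ S := integral_nonneg fun h => hw₀ _ (norm_nonneg h)
    calc 2 ^ Module.finrank ℝ (Euc d) * (‖grad1 g x x - grad1 g y y‖ / ‖grad1 g x x‖) * S
        ≤ 2 ^ Module.finrank ℝ (Euc d) * (Kg / δ * ‖x - y‖) * S := by gcongr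
      _ = _ := by ring
  have hdiff : ∫ h, ‖btIntegrand g p x h - btIntegrand g p y h‖ ≤ K * ‖x - y‖ * S := by
    rw [← integral_const_mul]
    exact integral_mono (((hF x).sub (hF y)).norm) (hw.const_mul _) (hFK x y)
  rw [dist_eq_norm, dist_eq_norm]
  refine (norm_btCoeff_sub_le (hF x) (hF y) (hw.const_mul C) (hFC x) (hFC y)).trans ?_
  rw [integral_const_mul]
  calc _ ≤ 1 / 2 * (C * (2 ^ Module.finrank ℝ (Euc d) * (Kg / δ) * S / V * ‖x - y‖) +
        K * ‖x - y‖ * S) := by gcongr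
    _ = _ := by ring

end Drift

theorem stmt3_general {d : ℕ} (g p : Euc d → Euc d → ℝ)
    (hker : IsMutKernel p) (hH1 : H1 g) (hH2 : H2 p) :
    (∃ C : ℝ, ∀ x : Euc d, ‖btCoeff g p x‖ ≤ C) ∧
    (∀ K : Set (Euc d), IsCompact K → Convex ℝ K → K ∩ Gam g = ∅ →
      ∃ L : ℝ≥0, LipschitzOnWith L (btCoeff g p) K) ∧
    (∀ x : Euc d, x ∉ Gam g → ∃ ε : ℝ, 0 < ε ∧ Metric.ball x ε ∩ Gam g = ∅ ∧
      ∃ L : ℝ≥0, LipschitzOnWith L (btCoeff g p) (Metric.ball x ε)) := by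
  obtain ⟨Kg, hKg⟩ := hH1.2.2.1
  have hv : Continuous fun x => grad1 g x x := hKg.comp_diag.continuous
  have hlip : ∀ K : Set (Euc d), IsCompact K → K ∩ Gam g = ∅ →
      ∃ L : ℝ≥0, LipschitzOnWith L (btCoeff g p) K := by
    intro K hK hKΓ
    obtain ⟨δ, hδ, hKδ⟩ := hK.exists_forall_le' hv.norm.continuousOn fun x hx =>
      norm_pos_iff.2 fun h => hKΓ.subset ⟨hx, h⟩
    obtain ⟨L, hL⟩ := exists_lipschitzOnWith_btCoeff hker hH1 hH2 hδ
    exact ⟨L, hL.mono hKδ⟩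
  refine ⟨exists_norm_btCoeff_le hker hH1 hH2, fun K hK _ => hlip K hK, fun x hx => ?_⟩
  obtain ⟨ε, hε, hball⟩ := isOpen_iff.1 (isClosed_eq hv continuous_const).isOpen_compl x hx
  have hclosed : closedBall x (ε / 2) ∩ Gam g = ∅ :=
    (subset_compl_iff_disjoint_right.1 ((closedBall_subset_ball (half_lt_self hε)).trans hball))
      |>.inter_eq
  obtain ⟨L, hL⟩ := hlip _ (isCompact_closedBall x (ε / 2)) hclosed
  exact ⟨ε / 2, half_pos hε, subset_eq_empty (inter_subset_inter_left _ ball_subset_closedBall)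
    hclosed, L, hL.mono ball_subset_closedBall⟩

theorem stmt3 {d : ℕ} (hd : 1 ≤ d) (g p : Euc d → Euc d → ℝ)
    (hker : IsMutKernel p) (hH1 : H1 g) (hH2 : H2 p) :
    (∃ C : ℝ, ∀ x : Euc d, ‖btCoeff g p x‖ ≤ C) ∧
    (∀ K : Set (Euc d), IsCompact K → Convex ℝ K → K ∩ Gam g = ∅ →
      ∃ L : ℝ≥0, LipschitzOnWith L (btCoeff g p) K) ∧
    (∀ x : Euc d, x ∉ Gam g → ∃ ε : ℝ, 0 < ε ∧ Metric.ball x ε ∩ Gam g = ∅ ∧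
      ∃ L : ℝ≥0, LipschitzOnWith L (btCoeff g p) (Metric.ball x ε)) :=
  stmt3_general g p hker hH1 hH2
end
end

section
/- Let x ∈ ℝ^d be such that p(x,·) is a probability density with finite third moment M₃(x) = ∫‖h‖³ p(x,h) dh and p(x,−h)=p(x,h) for all h, and such that g is differentiable in its first variable at (x,x). Set C(x) = inf over unit vectors u,v ∈ ℝ^d of ∫_{ℝ^d} |h·u|²|h·v| p(x,h) dh. Then for all s ∈ ℝ^d: (1/2) C(x) ‖s‖² ‖∇₁g(x,x)‖ ≤ sᵀ a(x) s ≤ (1/2) M₃(x) ‖s‖² ‖∇₁g(x,x)‖. -/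
/-! Since `p(x, ·)` is even and `h ↦ ⟪h, ∇₁g(x, x)⟫` is odd, writing `[t]₊ = (t + |t|) / 2` gives
`sᵀ a(x) s = ½ ∫ ⟪h, s⟫² |⟪h, ∇₁g(x, x)⟫| p(x, h) dh`. This integral is homogeneous of degree two in
`s` and one in `∇₁g(x, x)`, so rescaling both to unit vectors gives the lower bound, while
Cauchy–Schwarz, `|⟪h, s⟫|² |⟪h, v⟫| ≤ ‖s‖² ‖v‖ ‖h‖³`, gives the upper one. -/

open MeasureTheory Real Set
open scoped RealInnerProductSpace ENNReal NNReal

noncomputable section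

variable {d : ℕ}

lemma EuclideanSpace.abs_apply_le_norm (h : Euc d) (k : Fin d) : |h k| ≤ ‖h‖ :=
  PiLp.norm_apply_le h k

lemma EuclideanSpace.inner_sq_eq_sum_sum (h s : Euc d) :
    ⟪h, s⟫ ^ 2 = ∑ k, ∑ l, s k * (h k * h l) * s l := by
  simp only [PiLp.inner_apply, RCLike.inner_apply, conj_trivial, sq, Finset.sum_mul_sum]
  exact Finset.sum_congr rfl fun k _ => Finset.sum_congr rfl fun l _ => by ring

lemma inner_sq_mul_abs_inner_le {E : Type*} [NormedAddCommGroup E] [InnerProductSpace ℝ E]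
    (h u v : E) : |⟪h, u⟫| ^ 2 * |⟪h, v⟫| ≤ ‖u‖ ^ 2 * ‖v‖ * ‖h‖ ^ 3 :=
  calc |⟪h, u⟫| ^ 2 * |⟪h, v⟫| ≤ (‖h‖ * ‖u‖) ^ 2 * (‖h‖ * ‖v‖) := by
        gcongr <;> exact abs_real_inner_le_norm _ _
    _ = ‖u‖ ^ 2 * ‖v‖ * ‖h‖ ^ 3 := by ring

lemma MeasureTheory.Integrable.mul_of_abs_le {α : Type*} [MeasurableSpace α] {μ : Measure α}
    {f w b : α → ℝ} {C : ℝ} (hbw : Integrable (fun a => b a * w a) μ)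
    (hf : AEStronglyMeasurable f μ) (hw : AEStronglyMeasurable w μ) (hw0 : ∀ a, 0 ≤ w a)
    (hfb : ∀ a, |f a| ≤ C * b a) : Integrable (fun a => f a * w a) μ := by
  refine (hbw.const_mul C).mono' (hf.mul hw) (ae_of_all _ fun a => ?_)
  rw [Real.norm_eq_abs, abs_mul, abs_of_nonneg (hw0 a), ← mul_assoc]
  exact mul_le_mul_of_nonneg_right (hfb a) (hw0 a)

section Symmetrization

variable {E : Type*} [MeasurableSpace E] [AddGroup E] [MeasurableNeg E] {μ : Measure E}
  [μ.IsNegInvariant] {w f : E → ℝ}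

lemma integral_eq_zero_of_odd (hf : ∀ h, f (-h) = -f h) : ∫ h, f h ∂μ = 0 := by
  have := integral_neg_eq_self f μ
  simp only [hf, integral_neg] at this
  linarith

lemma integral_mul_max_zero_eq_half_integral_mul_abs (hw0 : ∀ h, 0 ≤ w h)
    (hw : ∀ h, w (-h) = w h) (hf : ∀ h, f (-h) = -f h) (hint : Integrable (fun h => w h * f h) μ) :
    ∫ h, w h * max (f h) 0 ∂μ = 1 / 2 * ∫ h, w h * |f h| ∂μ := by
  have hint_abs : Integrable (fun h => w h * |f h|) μ :=
    hint.abs.congr (ae_of_all _ fun h => by simp only [abs_mul, abs_of_nonneg (hw0 h)])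
  have hodd : ∫ h, w h * f h ∂μ = 0 := integral_eq_zero_of_odd fun h => by rw [hw, hf, mul_neg]
  have hpos_part : ∀ t : ℝ, max t 0 = 1 / 2 * (t + |t|) := fun t => by
    rcases le_total 0 t with ht | ht
    · rw [max_eq_left ht, abs_of_nonneg ht]; ring
    · rw [max_eq_right ht, abs_of_nonpos ht]; ring
  calc ∫ h, w h * max (f h) 0 ∂μ = 1 / 2 * ((∫ h, w h * f h ∂μ) + ∫ h, w h * |f h| ∂μ) := by
        rw [← integral_add hint hint_abs, ← integral_const_mul]
        exact integral_congr_ae (ae_of_all _ fun h => by simp only [hpos_part]; ring)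
    _ = 1 / 2 * ∫ h, w h * |f h| ∂μ := by rw [hodd, zero_add]

end Symmetrization

section MixedMoment

variable {E : Type*} [NormedAddCommGroup E] [InnerProductSpace ℝ E] [MeasurableSpace E]
  (μ : Measure E) (w : E → ℝ)

def mixedMoment (u v : E) : ℝ := ∫ h, |⟪h, u⟫| ^ 2 * |⟪h, v⟫| * w h ∂μ

variable {μ w}

lemma mixedMoment_nonneg (hw0 : ∀ h, 0 ≤ w h) (u v : E) : 0 ≤ mixedMoment μ w u v :=
  integral_nonneg fun h => by have := hw0 h; positivity

lemma mixedMoment_smul_smul (a b : ℝ) (u v : E) :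
    mixedMoment μ w (a • u) (b • v) = a ^ 2 * |b| * mixedMoment μ w u v := by
  rw [mixedMoment, mixedMoment, ← integral_const_mul]
  refine integral_congr_ae (ae_of_all _ fun h => ?_)
  simp only [real_inner_smul_right, abs_mul, mul_pow, sq_abs]
  ring

lemma iInf_mixedMoment_mul_le (hw0 : ∀ h, 0 ≤ w h) (u v : E) :
    (⨅ uv : Metric.sphere (0 : E) 1 × Metric.sphere (0 : E) 1, mixedMoment μ w uv.1 uv.2)
      * ‖u‖ ^ 2 * ‖v‖ ≤ mixedMoment μ w u v := by
  rcases eq_or_ne u 0 with rfl | hu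
  · simpa using mixedMoment_nonneg hw0 0 v
  rcases eq_or_ne v 0 with rfl | hv
  · simpa using mixedMoment_nonneg hw0 u 0
  have hu' : ‖u‖⁻¹ • u ∈ Metric.sphere (0 : E) 1 := by simp [norm_smul, hu]
  have hv' : ‖v‖⁻¹ • v ∈ Metric.sphere (0 : E) 1 := by simp [norm_smul, hv]
  have hle := ciInf_le (f := fun uv : Metric.sphere (0 : E) 1 × Metric.sphere (0 : E) 1 =>
    mixedMoment μ w uv.1 uv.2) ⟨0, by rintro _ ⟨uv, rfl⟩; exact mixedMoment_nonneg hw0 uv.1 uv.2⟩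
    (⟨_, hu'⟩, ⟨_, hv'⟩)
  calc (⨅ uv : Metric.sphere (0 : E) 1 × Metric.sphere (0 : E) 1, mixedMoment μ w uv.1 uv.2)
        * ‖u‖ ^ 2 * ‖v‖
      ≤ mixedMoment μ w (‖u‖⁻¹ • u) (‖v‖⁻¹ • v) * ‖u‖ ^ 2 * ‖v‖ := by gcongr
    _ = mixedMoment μ w u v := by
      rw [mixedMoment_smul_smul, abs_of_nonneg (by positivity)]
      field_simp

lemma mixedMoment_le (hw0 : ∀ h, 0 ≤ w h) (hw3 : Integrable (fun h => ‖h‖ ^ 3 * w h) μ)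
    (u v : E) : mixedMoment μ w u v ≤ ‖u‖ ^ 2 * ‖v‖ * ∫ h, ‖h‖ ^ 3 * w h ∂μ := by
  rw [mixedMoment, ← integral_const_mul]
  refine integral_mono_of_nonneg (ae_of_all _ fun h => by have := hw0 h; positivity)
    (hw3.const_mul _) (ae_of_all _ fun h => ?_)
  calc |⟪h, u⟫| ^ 2 * |⟪h, v⟫| * w h ≤ ‖u‖ ^ 2 * ‖v‖ * ‖h‖ ^ 3 * w h :=
        mul_le_mul_of_nonneg_right (inner_sq_mul_abs_inner_le h u v) (hw0 h)
    _ = ‖u‖ ^ 2 * ‖v‖ * (‖h‖ ^ 3 * w h) := by ring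

end MixedMoment

section DiffusionMatrix

variable {g p : Euc d → Euc d → ℝ} {x : Euc d}

lemma quadA_eq_integral
    (hint : ∀ k l, Integrable (fun h : Euc d => h k * h l * max ⟪h, grad1 g x x⟫ 0 * p x h))
    (s : Euc d) :
    quadA g p x s = ∫ h, ⟪h, s⟫ ^ 2 * max ⟪h, grad1 g x x⟫ 0 * p x h := by
  have hint' : ∀ k l, Integrable
      (fun h : Euc d => s k * (h k * h l * max ⟪h, grad1 g x x⟫ 0 * p x h) * s l) :=
    fun k l => ((hint k l).const_mul (s k)).mul_const (s l)
  calc quadA g p x s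
      = ∑ k, ∑ l, ∫ h, s k * (h k * h l * max ⟪h, grad1 g x x⟫ 0 * p x h) * s l := by
        simp only [quadA, aMat, Matrix.of_apply, integral_const_mul, integral_mul_const]
    _ = ∫ h, ∑ k, ∑ l, s k * (h k * h l * max ⟪h, grad1 g x x⟫ 0 * p x h) * s l := by
        rw [integral_finsetSum _ fun k _ => integrable_finsetSum _ fun l _ => hint' k l]
        exact Finset.sum_congr rfl fun k _ => (integral_finsetSum _ fun l _ => hint' k l).symm
    _ = ∫ h, ⟪h, s⟫ ^ 2 * max ⟪h, grad1 g x x⟫ 0 * p x h := by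
        refine integral_congr_ae (ae_of_all _ fun h => ?_)
        simp only [EuclideanSpace.inner_sq_eq_sum_sum h s, Finset.sum_mul]
        exact Finset.sum_congr rfl fun k _ => Finset.sum_congr rfl fun l _ => by ring

lemma quadA_eq_half_mixedMoment (hmeas : Measurable (fun h : Euc d => p x h))
    (hpos : ∀ h : Euc d, 0 ≤ p x h) (hmom : Integrable (fun h : Euc d => ‖h‖ ^ 3 * p x h))
    (hsymm : ∀ h : Euc d, p x (-h) = p x h) (s : Euc d) :
    quadA g p x s = 1 / 2 * mixedMoment volume (p x) s (grad1 g x x) := by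
  set G := grad1 g x x
  have hinner : ∀ v : Euc d, Measurable fun h : Euc d => ⟪h, v⟫ := fun v =>
    (continuous_id.inner continuous_const).measurable
  have hcoord : ∀ k : Fin d, Measurable fun h : Euc d => h k := fun k =>
    (EuclideanSpace.proj k : Euc d →L[ℝ] ℝ).continuous.measurable
  have hentry : ∀ k l, Integrable (fun h : Euc d => h k * h l * max ⟪h, G⟫ 0 * p x h) :=
    fun k l => hmom.mul_of_abs_le (f := fun h => h k * h l * max ⟪h, G⟫ 0) (C := ‖G‖)
      (((hcoord k).mul (hcoord l)).mul ((hinner G).max measurable_const)).aestronglyMeasurable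
      hmeas.aestronglyMeasurable hpos fun h => by
        rw [abs_mul, abs_mul, abs_of_nonneg (le_max_right ⟪h, G⟫ 0)]
        calc |h k| * |h l| * max ⟪h, G⟫ 0 ≤ ‖h‖ * ‖h‖ * (‖h‖ * ‖G‖) := by
              gcongr
              · exact EuclideanSpace.abs_apply_le_norm h k
              · exact EuclideanSpace.abs_apply_le_norm h l
              · exact max_le ((le_abs_self _).trans (abs_real_inner_le_norm h G)) (by positivity)
          _ = ‖G‖ * ‖h‖ ^ 3 := by ring
  have hint : Integrable (fun h : Euc d => ⟪h, s⟫ ^ 2 * p x h * ⟪h, G⟫) :=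
    (hmom.mul_of_abs_le (f := fun h => ⟪h, s⟫ ^ 2 * ⟪h, G⟫) (C := ‖s‖ ^ 2 * ‖G‖)
      (((hinner s).pow_const 2).mul (hinner G)).aestronglyMeasurable
      hmeas.aestronglyMeasurable hpos fun h => by
        rw [abs_mul, abs_pow]
        exact inner_sq_mul_abs_inner_le h s G).congr
      (ae_of_all _ fun h => by ring)
  rw [quadA_eq_integral hentry, mixedMoment]
  calc ∫ h, ⟪h, s⟫ ^ 2 * max ⟪h, G⟫ 0 * p x h
      = ∫ h, ⟪h, s⟫ ^ 2 * p x h * max ⟪h, G⟫ 0 :=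
        integral_congr_ae (ae_of_all _ fun h => by ring)
    _ = 1 / 2 * ∫ h, ⟪h, s⟫ ^ 2 * p x h * |⟪h, G⟫| :=
        integral_mul_max_zero_eq_half_integral_mul_abs (fun h => by have := hpos h; positivity)
          (fun h => by rw [inner_neg_left, neg_sq, hsymm]) (fun h => inner_neg_left h G) hint
    _ = 1 / 2 * ∫ h, |⟪h, s⟫| ^ 2 * |⟪h, G⟫| * p x h := by
        congr 1
        exact integral_congr_ae (ae_of_all _ fun h => by simp only [sq_abs]; ring)

end DiffusionMatrix

theorem stmt7_general {d : ℕ} (g p : Euc d → Euc d → ℝ) (x : Euc d)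
    (hmeas : Measurable (fun h : Euc d => p x h))
    (hpos : ∀ h : Euc d, 0 ≤ p x h)
    (hmom : Integrable (fun h : Euc d => ‖h‖ ^ 3 * p x h))
    (hsymm : ∀ h : Euc d, p x (-h) = p x h) :
    ∀ s : Euc d,
      (1 / 2) * (⨅ uv : Metric.sphere (0 : Euc d) 1 × Metric.sphere (0 : Euc d) 1,
          ∫ h : Euc d, |⟪h, (uv.1 : Euc d)⟫| ^ 2 * |⟪h, (uv.2 : Euc d)⟫| * p x h)
          * ‖s‖ ^ 2 * ‖grad1 g x x‖ ≤ quadA g p x s ∧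
      quadA g p x s ≤
        (1 / 2) * (∫ h : Euc d, ‖h‖ ^ 3 * p x h) * ‖s‖ ^ 2 * ‖grad1 g x x‖ := by
  intro s
  rw [quadA_eq_half_mixedMoment hmeas hpos hmom hsymm s]
  have hlower := iInf_mixedMoment_mul_le (μ := volume) hpos s (grad1 g x x)
  have hupper := mixedMoment_le hpos hmom s (grad1 g x x)
  constructor
  · unfold mixedMoment at hlower ⊢
    linarith
  · linarith

theorem stmt7 {d : ℕ} (hd : 1 ≤ d) (g p : Euc d → Euc d → ℝ) (x : Euc d)
    (hmeas : Measurable (fun h : Euc d => p x h))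
    (hpos : ∀ h : Euc d, 0 ≤ p x h)
    (hint : Integrable (fun h : Euc d => p x h))
    (hone : (∫ h : Euc d, p x h) = 1)
    (hmom : Integrable (fun h : Euc d => ‖h‖ ^ 3 * p x h))
    (hsymm : ∀ h : Euc d, p x (-h) = p x h)
    (hdiff : DifferentiableAt ℝ (fun z => g z x) x) :
    ∀ s : Euc d,
      (1 / 2) * (⨅ uv : Metric.sphere (0 : Euc d) 1 × Metric.sphere (0 : Euc d) 1,
          ∫ h : Euc d, |⟪h, (uv.1 : Euc d)⟫| ^ 2 * |⟪h, (uv.2 : Euc d)⟫| * p x h)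
          * ‖s‖ ^ 2 * ‖grad1 g x x‖ ≤ quadA g p x s ∧
      quadA g p x s ≤
        (1 / 2) * (∫ h : Euc d, ‖h‖ ^ 3 * p x h) * ‖s‖ ^ 2 * ‖grad1 g x x‖ :=
  stmt7_general g p x hmeas hpos hmom hsymm
end
end

section
/- Assume (H) and that g is C² on ℝ^{2d}. Let y ∈ Γ, let α₀ > 0, and let M₃ = sup_{x : ‖x−y‖ ≤ α₀} ∫‖h‖³ p(x,h) dh. Then for every δ > 0 there exists ρ ∈ (0,α₀] such that for all x with 0 < ‖x−y‖ ≤ ρ: |((x−y)/‖x−y‖) · b̃(x)| ≤ (M₃/2)·‖H₁₁g(y,y)‖_op + δ, where ‖·‖_op is the operator norm. -/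
/-! The drift `b̃(x)` is half the vector integral of `(hᵀ H₁₁g(x,x) h) p(x,h) h` over a half-space,
so its norm is at most `½ ‖H₁₁g(x,x)‖ ∫ ‖h‖³ p(x,h) dh ≤ ½ M₃ ‖H₁₁g(x,x)‖`. Lipschitz continuity of
`H₁₁g` gives `‖H₁₁g(x,x)‖ ≤ ‖H₁₁g(y,y)‖ + K ‖x - y‖`, and the error term is below `δ` once
`‖x - y‖` is small. -/

open MeasureTheory Real Set
open scoped RealInnerProductSpace ENNReal NNReal

noncomputable section

variable {d : ℕ}

theorem norm_quadratic_smul_le {E : Type*} [SeminormedAddCommGroup E] [NormedSpace ℝ E]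
    (B : E →L[ℝ] E →L[ℝ] ℝ) {w : ℝ} (hw : 0 ≤ w) (h : E) :
    ‖(B h h * w) • h‖ ≤ ‖B‖ * (‖h‖ ^ 3 * w) :=
  calc ‖(B h h * w) • h‖ = ‖B h h‖ * w * ‖h‖ := by
        rw [norm_smul, norm_mul, Real.norm_of_nonneg hw]
    _ ≤ ‖B‖ * ‖h‖ * ‖h‖ * w * ‖h‖ := by gcongr; exact B.le_opNorm₂ h h
    _ = ‖B‖ * (‖h‖ ^ 3 * w) := by ring

theorem norm_integral_quadratic_smul_le {E : Type*} [NormedAddCommGroup E] [NormedSpace ℝ E]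
    [MeasurableSpace E] {μ : Measure E} (B : E →L[ℝ] E →L[ℝ] ℝ) {w : E → ℝ}
    (hw₀ : ∀ h, 0 ≤ w h) (hw : Integrable (fun h => ‖h‖ ^ 3 * w h) μ) :
    ‖∫ h, (B h h * w h) • h ∂μ‖ ≤ ‖B‖ * ∫ h, ‖h‖ ^ 3 * w h ∂μ := by
  rw [← integral_const_mul]
  exact norm_integral_le_of_norm_le (hw.const_mul _)
    (ae_of_all _ fun h => norm_quadratic_smul_le B (hw₀ h) h)

theorem LipschitzWith.norm_apply_diag_le {E F : Type*} [SeminormedAddCommGroup E]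
    [SeminormedAddCommGroup F] {K : ℝ≥0} {f : E × E → F} (hf : LipschitzWith K f) (x y : E) :
    ‖f (x, x)‖ ≤ ‖f (y, y)‖ + K * ‖x - y‖ := by
  have h := hf.dist_le_mul (x, x) (y, y)
  rw [Prod.dist_eq, max_self, dist_eq_norm, dist_eq_norm] at h
  linarith [norm_sub_norm_le (f (x, x)) (f (y, y))]

section

variable {g p : Euc d → Euc d → ℝ}

theorem btCoeff_eq_integral (hpm : Measurable (Function.uncurry p)) (hp₀ : ∀ x h, 0 ≤ p x h)
    (x : Euc d) (hp3 : Integrable (fun h : Euc d => ‖h‖ ^ 3 * p x h)) :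
    btCoeff g p x = (1 / 2 : ℝ) •
      ∫ h in {h : Euc d | 0 < ⟪h, grad1 g x x⟫}, (hess11 g x x h h * p x h) • h := by
  set H := hess11 g x x
  have hmeas : Measurable fun h : Euc d => (H h h * p x h) • h :=
    (((H.continuous₂.comp (continuous_id.prodMk continuous_id)).measurable.mul
      (hpm.comp measurable_prodMk_left)).smul measurable_id)
  have hint : Integrable (fun h : Euc d => (H h h * p x h) • h) :=
    (hp3.const_mul ‖H‖).mono' hmeas.aestronglyMeasurable
      (ae_of_all _ fun h => norm_quadratic_smul_le H (hp₀ x h) h)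
  ext k
  have hk := (EuclideanSpace.proj k : Euc d →L[ℝ] ℝ).integral_comp_comm
    (hint.restrict (s := {h : Euc d | 0 < ⟪h, grad1 g x x⟫}))
  simp only [EuclideanSpace.proj, PiLp.proj_apply] at hk
  simp only [btCoeff, WithLp.equiv_symm_apply, PiLp.toLp_apply, PiLp.smul_apply, smul_eq_mul, ← hk]
  congr 1
  refine integral_congr_ae (ae_of_all _ fun h => ?_)
  ring

theorem norm_btCoeff_le_s8 (hpm : Measurable (Function.uncurry p)) (hp₀ : ∀ x h, 0 ≤ p x h)
    (x : Euc d) (hp3 : Integrable (fun h : Euc d => ‖h‖ ^ 3 * p x h)) :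
    ‖btCoeff g p x‖ ≤ 1 / 2 * (‖hess11 g x x‖ * ∫ h : Euc d, ‖h‖ ^ 3 * p x h) := by
  have hw : ∀ h : Euc d, 0 ≤ ‖h‖ ^ 3 * p x h := fun h => by have := hp₀ x h; positivity
  rw [btCoeff_eq_integral hpm hp₀ x hp3, norm_smul, Real.norm_of_nonneg (by norm_num)]
  gcongr
  exact (norm_integral_quadratic_smul_le _ (hp₀ x) hp3.restrict).trans
    (mul_le_mul_of_nonneg_left (setIntegral_le_integral hp3 (ae_of_all _ hw)) (by positivity))

end

theorem stmt8_general {d : ℕ} (g p : Euc d → Euc d → ℝ)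
    (hker : IsMutKernel p) (hH1 : H1 g) (hH2 : H2 p)
    (y : Euc d) (α₀ : ℝ) (hα₀ : 0 < α₀) (M₃ : ℝ)
    (hM₃ : ∀ x : Euc d, ‖x - y‖ ≤ α₀ → (∫ h : Euc d, ‖h‖ ^ 3 * p x h) ≤ M₃) :
    ∀ δ : ℝ, 0 < δ → ∃ ρ : ℝ, 0 < ρ ∧ ρ ≤ α₀ ∧
      ∀ x : Euc d, x ≠ y → ‖x - y‖ ≤ ρ →
        |⟪(‖x - y‖)⁻¹ • (x - y), btCoeff g p x⟫| ≤ M₃ / 2 * ‖hess11 g y y‖ + δ := by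
  obtain ⟨hpm, hp₀, -⟩ := hker
  obtain ⟨-, -, -, -, K, hK⟩ := hH1
  obtain ⟨hp3, -⟩ := hH2
  have hM₃₀ : 0 ≤ M₃ := (integral_nonneg fun h => by have := hp₀ y h; positivity).trans
    (hM₃ y (by simpa using hα₀.le))
  intro δ hδ
  set C : ℝ := M₃ / 2 * K + 1
  have hC : 0 < C := by positivity
  refine ⟨min α₀ (δ / C), lt_min hα₀ (div_pos hδ hC), min_le_left _ _, fun x hxy hxρ => ?_⟩
  have hKρ : M₃ / 2 * K * ‖x - y‖ ≤ δ := calc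
    M₃ / 2 * K * ‖x - y‖ ≤ C * (δ / C) := by
      gcongr
      · exact le_add_of_nonneg_right zero_le_one
      · exact hxρ.trans (min_le_right _ _)
    _ = δ := mul_div_cancel₀ δ hC.ne'
  calc |⟪(‖x - y‖)⁻¹ • (x - y), btCoeff g p x⟫| ≤ ‖btCoeff g p x‖ := by
        refine (abs_real_inner_le_norm _ _).trans_eq ?_
        rw [norm_smul, norm_inv, norm_norm,
          inv_mul_cancel₀ (norm_ne_zero_iff.mpr (sub_ne_zero.mpr hxy)), one_mul]
    _ ≤ 1 / 2 * (‖hess11 g x x‖ * M₃) := by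
        grw [norm_btCoeff_le_s8 hpm hp₀ x (hp3 x), hM₃ x (hxρ.trans (min_le_left _ _))]
    _ ≤ 1 / 2 * ((‖hess11 g y y‖ + K * ‖x - y‖) * M₃) := by
        gcongr; exact hK.norm_apply_diag_le x y
    _ ≤ M₃ / 2 * ‖hess11 g y y‖ + δ := by linarith

theorem stmt8 {d : ℕ} (hd : 1 ≤ d) (g p : Euc d → Euc d → ℝ)
    (hker : IsMutKernel p) (hH1 : H1 g) (hH2 : H2 p)
    (hg2 : ContDiff ℝ 2 (fun q : Euc d × Euc d => g q.1 q.2))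
    (y : Euc d) (hy : y ∈ Gam g) (α₀ : ℝ) (hα₀ : 0 < α₀) (M₃ : ℝ)
    (hM₃ : ∀ x : Euc d, ‖x - y‖ ≤ α₀ → (∫ h : Euc d, ‖h‖ ^ 3 * p x h) ≤ M₃) :
    ∀ δ : ℝ, 0 < δ → ∃ ρ : ℝ, 0 < ρ ∧ ρ ≤ α₀ ∧
      ∀ x : Euc d, x ≠ y → ‖x - y‖ ≤ ρ →
        |⟪(‖x - y‖)⁻¹ • (x - y), btCoeff g p x⟫| ≤ M₃ / 2 * ‖hess11 g y y‖ + δ :=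
  stmt8_general g p hker hH1 hH2 y α₀ hα₀ M₃ hM₃
end
end
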